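/- arXiv:1602.00061 — 7 statements merged into one kernel-verified Lean document; each statement's English description precedes it below -/
import Mathlib

section
/- Let X be an n×d random matrix whose entries are i.i.d. real random variables with mean 0, variance 1, and finite absolute moments of every order, let T be a symmetric d×d real matrix, and set A = X T Xᵀ. Then for every k-cycle σ = (σ_1,…,σ_k) (a sequence of k distinct indices in {1,…,n}), the expectation E[∏_{i=1}^k A_{σ_i, σ_{(i mod k)+1}}] equals trace(T^k). -/
/-!
Expanding `A = X T Xᵀ` entrywise, the cycle product becomes a sum over column labellings
`a, b : Fin k → Fin d` of `∏ₜ T (a t) (b (t+1))` times `∏ₜ X (σ t) (a t) * X (σ t) (b t)`: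
since `σ` is injective, row `σ t` of `X` is met exactly twice, once by each of the two factors
of `A` adjacent to it. Distinct rows are independent, so the expectation of the second product
factorises over `t` into `E[X (σ t) (a t) * X (σ t) (b t)]`, which is `1` if `a t = b t` and `0`
otherwise (mean `0`, variance `1`). Only `b = a` survives, leaving the closed-walk expansion
`∑ₐ ∏ₜ T (a t) (a (t+1)) = trace (T ^ k)`.
-/

open MeasureTheory ProbabilityTheory Matrix

namespace Matrix

variable {n d R : Type*} [CommSemiring R]

theorem pow_succ_apply_eq_sum_prod [Fintype n] [DecidableEq n] (M : Matrix n n R) (m : ℕ)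
    (r c : n) :
    (M ^ (m + 1)) r c =
      ∑ f : Fin m → n, ∏ i,
        M ((Fin.cons r f : Fin (m + 1) → n) i) ((Fin.snoc f c : Fin (m + 1) → n) i) := by
  induction m generalizing r with
  | zero => simp [Fin.snoc]
  | succ m ih =>
    rw [pow_succ', mul_apply, ← (Fin.consEquiv fun _ ↦ n).sum_comp, Fintype.sum_prod_type]
    refine Finset.sum_congr rfl fun b _ ↦ ?_
    rw [ih, Finset.mul_sum]
    refine Finset.sum_congr rfl fun f _ ↦ ?_
    change _ = ∏ i, M ((Fin.cons r (Fin.cons b f : Fin (m + 1) → n) : Fin (m + 2) → n) i)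
      ((Fin.snoc (Fin.cons b f : Fin (m + 1) → n) c : Fin (m + 2) → n) i)
    rw [← Fin.cons_snoc_eq_snoc_cons, Fin.prod_univ_succ (n := m + 1)]
    simp only [Fin.cons_zero, Fin.cons_succ]

theorem trace_pow_eq_sum_prod [Fintype n] [DecidableEq n] {k : ℕ} [NeZero k] (M : Matrix n n R) :
    (M ^ k).trace = ∑ a : Fin k → n, ∏ i, M (a i) (a (i + 1)) := by
  obtain ⟨m, rfl⟩ : ∃ m, k = m + 1 := Nat.exists_eq_add_one.mpr (Nat.pos_of_neZero k)
  rw [trace, ← (Fin.consEquiv fun _ ↦ n).sum_comp, Fintype.sum_prod_type]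
  refine Finset.sum_congr rfl fun r _ ↦ ?_
  simp only [diag_apply, pow_succ_apply_eq_sum_prod, Fin.consEquiv_apply, Fin.snoc_eq_cons_rotate,
    finRotate_apply]

/-- `b` is indexed by rows: `b t` is the column at which the factor of `x * T * xᵀ` entering row
`σ t` meets it. -/
theorem prod_mul_mul_transpose_apply_cycle [Fintype d] {k : ℕ} [NeZero k] (x : Matrix n d R)
    (T : Matrix d d R) (σ : Fin k → n) :
    ∏ t, (x * T * xᵀ) (σ t) (σ (t + 1)) = ∑ a : Fin k → d, ∑ b : Fin k → d,
      (∏ t, T (a t) (b (t + 1))) * ∏ t, x (σ t) (a t) * x (σ t) (b t) := by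
  have entry (r c : n) : (x * T * xᵀ) r c = ∑ p, ∑ q, x r p * T p q * x c q := by
    simp only [mul_apply, transpose_apply, Finset.sum_mul]
    exact Finset.sum_comm
  simp_rw [entry, Fintype.prod_sum]
  refine Finset.sum_congr rfl fun a _ ↦ ?_
  let shift : (Fin k → d) ≃ (Fin k → d) := (Equiv.addRight 1).symm.arrowCongr (Equiv.refl d)
  rw [← shift.sum_comp]
  refine Finset.sum_congr rfl fun b _ ↦ ?_
  have hshift : ∏ t, x (σ (t + 1)) (b (t + 1)) = ∏ t, x (σ t) (b t) :=
    Equiv.prod_comp (Equiv.addRight (1 : Fin k)) fun t ↦ x (σ t) (b t)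
  simp only [shift, Equiv.arrowCongr_apply, Function.comp_apply, Equiv.symm_symm,
    Equiv.coe_addRight, Equiv.coe_refl, id, Finset.prod_mul_distrib, ← hshift]
  ring

end Matrix

theorem ProbabilityTheory.iIndepFun.integrable_fun_prod_comp {Ω ι 𝕜 : Type*} [MeasurableSpace Ω]
    {μ : Measure Ω} [Fintype ι] [RCLike 𝕜] {𝓧 : ι → Type*} [∀ i, MeasurableSpace (𝓧 i)]
    {X : (i : ι) → Ω → 𝓧 i} {f : (i : ι) → 𝓧 i → 𝕜} (hX : iIndepFun X μ)
    (mX : ∀ i, AEMeasurable (X i) μ) (hf : ∀ i, Integrable (f i) (μ.map (X i))) :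
    Integrable (fun ω ↦ ∏ i, f i (X i ω)) μ := by
  have := hX.isProbabilityMeasure
  have hprod : Integrable (fun x : (i : ι) → 𝓧 i ↦ ∏ i, f i (x i)) (μ.map fun ω i ↦ X i ω) := by
    rw [hX.map_fun_eq_pi_map mX]
    exact .fintype_prod_dep hf
  exact (integrable_map_measure hprod.aestronglyMeasurable (by fun_prop)).mp hprod

section PairMoments

variable {κ ι : Type*} [Fintype κ] [Fintype ι] [DecidableEq ι]

def pairCount (u v c : ι) : ℕ := (if u = c then 1 else 0) + (if v = c then 1 else 0)

theorem prod_mul_eq_prod_pow_pairCount {M : Type*} [CommMonoid M] (y : κ × ι → M)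
    (a b : κ → ι) :
    ∏ t, y (t, a t) * y (t, b t) = ∏ p, y p ^ pairCount (a p.1) (b p.1) p.2 := by
  simp only [Fintype.prod_prod_type, pairCount, pow_add, Finset.prod_mul_distrib,
    Finset.prod_pow_boole, Finset.mem_univ, if_true]

theorem prod_integral_pow_pairCount (ν : Measure ℝ) [IsProbabilityMeasure ν]
    (hmean : ∫ x, x ∂ν = 0) (hvar : ∫ x, x ^ 2 ∂ν = 1) (u v : ι) :
    ∏ c, ∫ x, x ^ pairCount u v c ∂ν = if u = v then 1 else 0 := by
  split_ifs with h
  · subst h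
    refine Finset.prod_eq_one fun c _ ↦ ?_
    by_cases hc : u = c <;> simp [pairCount, hc, hvar]
  · exact Finset.prod_eq_zero (Finset.mem_univ u) (by simp [pairCount, Ne.symm h, hmean])

variable {Ω : Type*} [MeasurableSpace Ω] {μ : Measure Ω} {Y : κ × ι → Ω → ℝ} {ν : Measure ℝ}

theorem integrable_prod_mul_of_iIndepFun (hY : iIndepFun Y μ) (mY : ∀ p, AEMeasurable (Y p) μ)
    (hlaw : ∀ p, μ.map (Y p) = ν) (hmom : ∀ j : ℕ, Integrable (fun x ↦ x ^ j) ν) (a b : κ → ι) :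
    Integrable (fun ω ↦ ∏ t, Y (t, a t) ω * Y (t, b t) ω) μ := by
  rw [funext fun ω ↦ prod_mul_eq_prod_pow_pairCount (Y · ω) a b]
  exact hY.integrable_fun_prod_comp mY fun p ↦ hlaw p ▸ hmom _

theorem integral_prod_mul_of_iIndepFun [IsProbabilityMeasure ν] (hY : iIndepFun Y μ)
    (mY : ∀ p, AEMeasurable (Y p) μ) (hlaw : ∀ p, μ.map (Y p) = ν)
    (hmean : ∫ x, x ∂ν = 0) (hvar : ∫ x, x ^ 2 ∂ν = 1) (a b : κ → ι) :
    ∫ ω, ∏ t, Y (t, a t) ω * Y (t, b t) ω ∂μ = ∏ t, if a t = b t then 1 else 0 := by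
  have hmoment (p : κ × ι) (j : ℕ) : ∫ ω, Y p ω ^ j ∂μ = ∫ x, x ^ j ∂ν := by
    rw [← hlaw p, integral_map (mY p) (by fun_prop)]
  rw [funext fun ω ↦ prod_mul_eq_prod_pow_pairCount (Y · ω) a b,
    hY.integral_fun_prod_comp (f := fun p x ↦ x ^ pairCount (a p.1) (b p.1) p.2) mY
      fun _ ↦ by fun_prop]
  simp only [hmoment, Fintype.prod_prod_type, prod_integral_pow_pairCount ν hmean hvar]

end PairMoments

theorem stmt_0_general
    {Ω : Type*} [MeasurableSpace Ω] {μ : Measure Ω}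
    {n d k : ℕ} [NeZero k]
    (X : Ω → Matrix (Fin n) (Fin d) ℝ)
    (hmeas : ∀ i j, Measurable fun ω => X ω i j)
    (hindep : iIndepFun
      (fun (p : Fin n × Fin d) ω => X ω p.1 p.2) μ)
    (ν : Measure ℝ) [IsProbabilityMeasure ν]
    (hid : ∀ i j, Measure.map (fun ω => X ω i j) μ = ν)
    (hmom : ∀ m : ℕ, Integrable (fun x : ℝ => |x| ^ m) ν)
    (hmean : (∫ x, x ∂ν) = 0)
    (hvar : (∫ x, x ^ 2 ∂ν) = 1)
    (T : Matrix (Fin d) (Fin d) ℝ)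
    (σ : Fin k → Fin n) (hσ : Function.Injective σ) :
    (∫ ω, ∏ i : Fin k, (X ω * T * (X ω)ᵀ) (σ i) (σ (i + 1)) ∂μ)
      = (T ^ k).trace := by
  set Y : Fin k × Fin d → Ω → ℝ := fun p ω ↦ X ω (σ p.1) p.2
  have hY : iIndepFun Y μ := hindep.precomp (hσ.prodMap Function.injective_id)
  have hYmeas (p : Fin k × Fin d) : AEMeasurable (Y p) μ := (hmeas _ _).aemeasurable
  have hYlaw (p : Fin k × Fin d) : μ.map (Y p) = ν := hid _ _
  have hpow (j : ℕ) : Integrable (fun x ↦ x ^ j) ν :=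
    (hmom j).mono' (by fun_prop) (ae_of_all _ fun x ↦ by simp)
  calc (∫ ω, ∏ i : Fin k, (X ω * T * (X ω)ᵀ) (σ i) (σ (i + 1)) ∂μ)
      = ∫ ω, ∑ a : Fin k → Fin d, ∑ b : Fin k → Fin d,
          (∏ t, T (a t) (b (t + 1))) * ∏ t, Y (t, a t) ω * Y (t, b t) ω ∂μ := by
        simp_rw [prod_mul_mul_transpose_apply_cycle, Y]
    _ = ∑ a : Fin k → Fin d, ∑ b : Fin k → Fin d,
          (∏ t, T (a t) (b (t + 1))) * ∏ t, if a t = b t then 1 else 0 := by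
        have hint (a b : Fin k → Fin d) :=
          integrable_prod_mul_of_iIndepFun hY hYmeas hYlaw hpow a b
        rw [integral_finsetSum _ fun a _ ↦ integrable_finsetSum _ fun b _ ↦ (hint a b).const_mul _]
        simp_rw [integral_finsetSum _ fun b _ ↦ (hint _ b).const_mul _, integral_const_mul,
          integral_prod_mul_of_iIndepFun hY hYmeas hYlaw hmean hvar]
    _ = ∑ a : Fin k → Fin d, ∏ t, T (a t) (a (t + 1)) := by
        simp [Fintype.prod_boole, ← funext_iff]
    _ = (T ^ k).trace := (trace_pow_eq_sum_prod T).symm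

/-- For an `n × d` random matrix `X` with i.i.d. entries of mean `0`,
variance `1` and finite absolute moments of every order, a symmetric `d × d` real matrix `T`,
and `A = X * T * Xᵀ`, the expectation of the cycle product
`∏_{i=1}^k A_{σ i, σ (i+1)}` (indices cyclic) over any `k`-cycle `σ` (an injective tuple of
row indices) equals `trace (T ^ k)`. -/
theorem stmt_0
    {Ω : Type*} [MeasurableSpace Ω] {μ : Measure Ω} [IsProbabilityMeasure μ]
    {n d k : ℕ} [NeZero k]
    (X : Ω → Matrix (Fin n) (Fin d) ℝ)
    (hmeas : ∀ i j, Measurable fun ω => X ω i j)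
    (hindep : iIndepFun
      (fun (p : Fin n × Fin d) ω => X ω p.1 p.2) μ)
    (ν : Measure ℝ) [IsProbabilityMeasure ν]
    (hid : ∀ i j, Measure.map (fun ω => X ω i j) μ = ν)
    (hmom : ∀ m : ℕ, Integrable (fun x : ℝ => |x| ^ m) ν)
    (hmean : (∫ x, x ∂ν) = 0)
    (hvar : (∫ x, x ^ 2 ∂ν) = 1)
    (T : Matrix (Fin d) (Fin d) ℝ) (hT : T.IsSymm)
    (σ : Fin k → Fin n) (hσ : Function.Injective σ) :
    (∫ ω, ∏ i : Fin k, (X ω * T * (X ω)ᵀ) (σ i) (σ (i + 1)) ∂μ)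
      = (T ^ k).trace :=
  stmt_0_general X hmeas hindep ν hid hmom hmean hvar T σ hσ
end

section
/- Let A be an n×n real matrix and let G be the strictly upper triangular part of A (i.e., G_{ij} = A_{ij} if i < j and G_{ij} = 0 otherwise). Then for every integer k ≥ 1, trace(G^{k-1} A) equals the sum, over all increasing k-cycles σ (sequences σ_1 < σ_2 < … < σ_k of indices in {1,…,n}), of the products A_σ = ∏_{i=1}^k A_{σ_i,σ_{i+1}} (with σ_{k+1} = σ_1). -/
/-!
Expanding the trace, `trace (G ^ m * A)` is a sum over closed walks `σ 0 → ⋯ → σ m → σ 0`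
whose first `m` steps are weighted by `G` and whose closing step is weighted by `A`. A step
weighted by `G` vanishes unless it goes up, so only strictly increasing walks survive, and along
those `G` agrees with `A`.
-/

namespace Matrix

variable {ι R : Type*} [CommSemiring R]

def walkProd {m : ℕ} (M : Matrix ι ι R) (σ : Fin (m + 1) → ι) : R :=
  ∏ t : Fin m, M (σ t.castSucc) (σ t.succ)

theorem walkProd_snoc {m : ℕ} (M : Matrix ι ι R) (σ : Fin (m + 1) → ι) (x : ι) :
    walkProd M (Fin.snoc σ x : Fin (m + 2) → ι) = walkProd M σ * M (σ (Fin.last m)) x := by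
  simp only [walkProd, Fin.prod_univ_castSucc, ← Fin.castSucc_succ, Fin.snoc_castSucc,
    Fin.snoc_last, Fin.succ_last]

theorem prod_cycle_eq_walkProd_mul {m : ℕ} (M : Matrix ι ι R) (σ : Fin (m + 1) → ι) :
    ∏ t : Fin (m + 1), M (σ t) (σ (t + 1)) = walkProd M σ * M (σ (Fin.last m)) (σ 0) := by
  simp only [Fin.prod_univ_castSucc, Fin.coeSucc_eq_succ, Fin.last_add_one, walkProd]

theorem walkProd_eq_ite_strictMono [Preorder ι] [DecidableLT ι] {A G : Matrix ι ι R}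
    (hG : ∀ i j, G i j = if i < j then A i j else 0) {m : ℕ} (σ : Fin (m + 1) → ι) :
    walkProd G σ = if StrictMono σ then walkProd A σ else 0 := by
  simp only [walkProd, hG]
  convert Fintype.prod_ite_zero (p := fun t : Fin m => σ t.castSucc < σ t.succ) using 2
  exact Fin.strictMono_iff_lt_succ

variable [Fintype ι] [DecidableEq ι]

theorem trace_pow_mul_eq_sum_walkProd (M B : Matrix ι ι R) (m : ℕ) :
    trace (M ^ m * B) = ∑ σ : Fin (m + 1) → ι, walkProd M σ * B (σ (Fin.last m)) (σ 0) := by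
  induction m generalizing B with
  | zero =>
    simp only [pow_zero, walkProd, Finset.univ_eq_empty, Finset.prod_empty, one_mul]
    exact ((Equiv.funUnique (Fin 1) ι).sum_comp fun i => B i i).symm
  | succ m ih =>
    rw [pow_succ, Matrix.mul_assoc, ih, ← (Fin.snocEquiv (n := m + 1) fun _ => ι).sum_comp,
      Fintype.sum_prod_type_right]
    refine Fintype.sum_congr _ _ fun σ => ?_
    simp only [Fin.snocEquiv_apply, Fin.snoc_last, mul_apply, Finset.mul_sum]
    refine Fintype.sum_congr _ _ fun x => ?_
    rw [← mul_assoc, ← walkProd_snoc]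
    rfl

end Matrix

open Classical in
/-- For an `n × n` real matrix `A` with strictly upper triangular part `G`,
and any `k ≥ 1`, `trace (G ^ (k-1) * A)` equals the sum over all increasing `k`-cycles
`σ_1 < σ_2 < … < σ_k` of the cycle products `∏_{i=1}^k A_{σ i, σ (i+1)}` (indices cyclic). -/
theorem stmt_2 {n k : ℕ} [NeZero k]
    (A G : Matrix (Fin n) (Fin n) ℝ)
    (hG : ∀ i j, G i j = if i < j then A i j else 0) :
    (G ^ (k - 1) * A).trace
      = ∑ σ ∈ Finset.univ.filter (fun σ : Fin k → Fin n => StrictMono σ),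
          ∏ i : Fin k, A (σ i) (σ (i + 1)) := by
  obtain ⟨m, rfl⟩ : ∃ m, k = m + 1 := Nat.exists_eq_succ_of_ne_zero (NeZero.ne k)
  rw [Nat.add_sub_cancel, Matrix.trace_pow_mul_eq_sum_walkProd, Finset.sum_filter]
  refine Fintype.sum_congr _ _ fun σ => ?_
  rw [Matrix.walkProd_eq_ite_strictMono hG, ite_mul, zero_mul, Matrix.prod_cycle_eq_walkProd_mul]
end

section
/- For every even integer k ≥ 4 there exist Borel probability measures p and q on ℝ, each supported on at most k/2 points of the interval [−1, 1], such that ∫ x^ℓ dp(x) = ∫ x^ℓ dq(x) for every ℓ = 1, 2, …, k−2, and yet there exists a function f : ℝ → ℝ that is Lipschitz with constant 1 with ∫ f dp − ∫ f dq > 1/(2k) (equivalently, the Wasserstein-1 distance satisfies W₁(p,q) > 1/(2k)). -/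
/-!
Put the binomial weights `C(n, j) / 2^(n-1)` on the grid points `t_j = 2j/n - 1`, `j = 0, …, n`,
where `n = k - 1`, and let `p` and `q` keep the even and the odd indices respectively.
A polynomial `P` of degree `< n` has vanishing `n`-th forward difference,
`∑ⱼ (-1)^j C(n, j) P(j) = 0`, so `p` and `q` integrate every polynomial of degree `< n` alike:
for `P = 1`, together with `∑ⱼ C(n, j) = 2^n`, both have mass one; for `P = x^ℓ` the moments agree.
The even and odd grid points are at distance at least `2/n` from each other, so the distance to the
support of `q` is a `1`-Lipschitz function with `q`-integral `0` and `p`-integral `≥ 2/n > 1/(2k)`.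
-/

open MeasureTheory Finset Polynomial Metric

theorem alternating_sum_choose_mul_eval_eq_zero {R : Type*} [CommRing R] {P : R[X]} {n : ℕ}
    (hP : P.natDegree < n) :
    ∑ j ∈ range (n + 1), (-1) ^ j * n.choose j * P.eval (j : R) = 0 := by
  have h := congr_fun (fwdDiff_iter_eq_zero_of_degree_lt hP) 0
  rw [fwdDiff_iter_eq_sum_shift, Pi.zero_apply] at h
  rw [← mul_zero ((-1 : R) ^ n), ← h, mul_sum]
  refine sum_congr rfl fun j hj => ?_
  have hsign : (-1 : R) ^ n = (-1) ^ (n - j) * (-1) ^ j := by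
    rw [← pow_add, Nat.sub_add_cancel (Nat.lt_succ_iff.1 (mem_range.1 hj))]
  have hsq : ((-1 : R) ^ (n - j)) ^ 2 = 1 := by
    rw [← pow_mul, mul_comm, pow_mul, neg_one_sq, one_pow]
  simp only [zero_add, nsmul_eq_mul, mul_one, zsmul_eq_mul, Int.cast_mul, Int.cast_pow,
    Int.cast_neg, Int.cast_one, Int.cast_natCast, hsign]
  linear_combination -((-1 : R) ^ j * n.choose j * P.eval (j : R)) * hsq

theorem sum_even_choose_mul_eval_eq_sum_odd {R : Type*} [CommRing R] {P : R[X]} {n : ℕ}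
    (hP : P.natDegree < n) :
    ∑ j ∈ (range (n + 1)).filter (· % 2 = 0), n.choose j * P.eval (j : R) =
      ∑ j ∈ (range (n + 1)).filter (· % 2 = 1), n.choose j * P.eval (j : R) := by
  have h := alternating_sum_choose_mul_eval_eq_zero hP
  rw [← sum_filter_add_sum_filter_not _ (· % 2 = 0)] at h
  simp only [Nat.mod_two_ne_zero] at h
  have heven : ∑ j ∈ (range (n + 1)).filter (· % 2 = 0), (-1) ^ j * n.choose j * P.eval (j : R) =
      ∑ j ∈ (range (n + 1)).filter (· % 2 = 0), n.choose j * P.eval (j : R) :=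
    sum_congr rfl fun j hj => by
      rw [neg_one_pow_eq_pow_mod_two, (mem_filter.1 hj).2, pow_zero, one_mul]
  have hodd : ∑ j ∈ (range (n + 1)).filter (· % 2 = 1), (-1) ^ j * n.choose j * P.eval (j : R) =
      -∑ j ∈ (range (n + 1)).filter (· % 2 = 1), n.choose j * P.eval (j : R) := by
    rw [← sum_neg_distrib]
    exact sum_congr rfl fun j hj => by
      rw [neg_one_pow_eq_pow_mod_two, (mem_filter.1 hj).2, pow_one, neg_one_mul, neg_mul]
  linear_combination h - heven - hodd

theorem sum_choose_filter_mod_two {n r : ℕ} (hn : 0 < n) (hr : r < 2) :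
    ∑ j ∈ (range (n + 1)).filter (· % 2 = r), (n.choose j : ℝ) = 2 ^ (n - 1) := by
  have hsplit := sum_even_choose_mul_eval_eq_sum_odd (R := ℝ) (P := 1) (n := n) (by simpa)
  have htotal := sum_filter_add_sum_filter_not (range (n + 1)) (· % 2 = 0) (n.choose · : ℕ → ℝ)
  have hbinom : ∑ j ∈ range (n + 1), (n.choose j : ℝ) = 2 * 2 ^ (n - 1) := by
    rw [← pow_succ', Nat.sub_add_cancel hn]
    exact_mod_cast Nat.sum_range_choose n
  simp only [Nat.mod_two_ne_zero, eval_one, mul_one] at hsplit htotal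
  interval_cases r <;> linarith

theorem card_filter_mod_two_range_le (N r : ℕ) :
    ((range N).filter (· % 2 = r)).card ≤ (N + 1) / 2 := by
  simpa using card_le_card_of_injOn (t := range ((N + 1) / 2)) (· / 2)
    (fun j hj => by
      simp only [coe_filter, mem_range, Set.mem_ofPred_eq, coe_range, Set.mem_Iio] at hj ⊢
      omega)
    (fun i hi j hj hij => by
      simp only [coe_filter, mem_range, Set.mem_ofPred_eq] at hi hj hij
      omega)

section FinsetDirac

variable {α ι : Type*} [MeasurableSpace α]

theorem integral_finset_sum_dirac [MeasurableSingletonClass α] (s : Finset ι) {w : ι → ℝ}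
    (hw : ∀ i ∈ s, 0 ≤ w i) (t : ι → α) (f : α → ℝ) :
    ∫ x, f x ∂(∑ i ∈ s, ENNReal.ofReal (w i) • Measure.dirac (t i)) = ∑ i ∈ s, w i * f (t i) := by
  rw [integral_finsetSum_measure fun i _ =>
    (integrable_dirac enorm_lt_top).smul_measure ENNReal.ofReal_ne_top]
  refine sum_congr rfl fun i hi => ?_
  rw [integral_smul_measure, integral_dirac, ENNReal.toReal_ofReal (hw i hi), smul_eq_mul]

theorem isProbabilityMeasure_finset_sum_dirac (s : Finset ι) {w : ι → ℝ} (hw : ∀ i ∈ s, 0 ≤ w i)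
    (hw1 : ∑ i ∈ s, w i = 1) (t : ι → α) :
    IsProbabilityMeasure (∑ i ∈ s, ENNReal.ofReal (w i) • Measure.dirac (t i)) := by
  constructor
  simp [Measure.finsetSum_apply, ← ENNReal.ofReal_sum_of_nonneg hw, hw1]

theorem finset_sum_dirac_apply_compl_image [MeasurableSingletonClass α] [DecidableEq α]
    (s : Finset ι) (c : ι → ENNReal) (t : ι → α) :
    (∑ i ∈ s, c i • Measure.dirac (t i)) (↑(s.image t))ᶜ = 0 := by
  simp only [Measure.finsetSum_apply, Measure.smul_apply, smul_eq_mul]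
  exact sum_eq_zero fun i hi => by
    rw [Measure.dirac_apply, Set.indicator_of_notMem (by simpa using mem_image_of_mem t hi),
      mul_zero]

end FinsetDirac

noncomputable def gridNode (n j : ℕ) : ℝ := 2 / n * j - 1

noncomputable def gridParityMeasure (n r : ℕ) : Measure ℝ :=
  ∑ j ∈ (range (n + 1)).filter (· % 2 = r),
    ENNReal.ofReal (n.choose j / 2 ^ (n - 1)) • Measure.dirac (gridNode n j)

noncomputable def gridParitySupport (n r : ℕ) : Finset ℝ :=
  ((range (n + 1)).filter (· % 2 = r)).image (gridNode n)

theorem two_div_le_dist_gridNode {n i j : ℕ} (hij : i ≠ j) :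
    2 / n ≤ dist (gridNode n i) (gridNode n j) := by
  have h1 : (1 : ℝ) ≤ |(i : ℝ) - j| := by
    exact_mod_cast Int.one_le_abs (sub_ne_zero.2 (by omega : (i : ℤ) ≠ j))
  have hsub : gridNode n i - gridNode n j = 2 / n * (i - j) := by
    simp only [gridNode]; ring
  rw [Real.dist_eq, hsub, abs_mul, abs_of_nonneg (by positivity)]
  exact le_mul_of_one_le_right (by positivity) h1

theorem gridNode_mem_gridParitySupport {n r j : ℕ}
    (hj : j ∈ (range (n + 1)).filter (· % 2 = r)) : gridNode n j ∈ gridParitySupport n r :=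
  mem_image_of_mem _ hj

namespace gridParityMeasure

theorem integral_eq (n r : ℕ) (f : ℝ → ℝ) :
    ∫ x, f x ∂gridParityMeasure n r =
      (∑ j ∈ (range (n + 1)).filter (· % 2 = r), n.choose j * f (gridNode n j)) / 2 ^ (n - 1) := by
  rw [gridParityMeasure, integral_finset_sum_dirac _ (fun _ _ => by positivity), sum_div]
  exact sum_congr rfl fun j _ => by ring

theorem isProbabilityMeasure {n r : ℕ} (hn : 0 < n) (hr : r < 2) :
    IsProbabilityMeasure (gridParityMeasure n r) :=
  isProbabilityMeasure_finset_sum_dirac _ (fun _ _ => by positivity)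
    (by rw [← sum_div, sum_choose_filter_mod_two hn hr, div_self (by positivity)]) _

theorem integral_eval_eq {P : ℝ[X]} {n : ℕ} (hP : P.natDegree < n) :
    ∫ x, P.eval x ∂gridParityMeasure n 0 = ∫ x, P.eval x ∂gridParityMeasure n 1 := by
  have hQ : (P.comp (C (2 / n : ℝ) * X - 1)).natDegree < n :=
    natDegree_comp_le.trans_lt <| by
      have : (C (2 / n : ℝ) * X - 1).natDegree ≤ 1 := by compute_degree
      nlinarith
  have h := sum_even_choose_mul_eval_eq_sum_odd hQ
  simp only [eval_comp, eval_sub, eval_mul, eval_C, eval_X, eval_one] at h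
  simp only [integral_eq, gridNode, h]

theorem apply_compl_support (n r : ℕ) : gridParityMeasure n r (gridParitySupport n r)ᶜ = 0 :=
  finset_sum_dirac_apply_compl_image _ _ _

theorem card_support_le (n r : ℕ) : (gridParitySupport n r).card ≤ (n + 2) / 2 :=
  card_image_le.trans (card_filter_mod_two_range_le _ _)

theorem support_subset_Icc {n : ℕ} (hn : 0 < n) (r : ℕ) :
    (gridParitySupport n r : Set ℝ) ⊆ Set.Icc (-1) 1 := by
  simp only [gridParitySupport, coe_image, coe_filter, Set.image_subset_iff]
  intro j hj
  simp only [Set.mem_ofPred_eq, mem_range] at hj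
  have : (j : ℝ) ≤ n := by exact_mod_cast Nat.lt_succ_iff.1 hj.1
  simp only [Set.mem_preimage, gridNode, Set.mem_Icc]
  constructor
  · have : 0 ≤ 2 / (n : ℝ) * j := by positivity
    linarith
  · rw [div_mul_eq_mul_div, div_sub_one (by positivity), div_le_one (by positivity)]
    linarith

theorem two_div_le_integral_infDist {n : ℕ} (hn : 0 < n) :
    2 / n ≤ ∫ x, infDist x (gridParitySupport n 1) ∂gridParityMeasure n 0 := by
  have hne : (gridParitySupport n 1 : Set ℝ).Nonempty :=
    ⟨gridNode n 1, gridNode_mem_gridParitySupport (mem_filter.2 ⟨mem_range.2 (by omega), rfl⟩)⟩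
  have hgap : ∀ j ∈ (range (n + 1)).filter (· % 2 = 0),
      2 / n ≤ infDist (gridNode n j) (gridParitySupport n 1) := by
    intro j hj
    refine (le_infDist hne).2 fun y hy => ?_
    obtain ⟨i, hi, rfl⟩ := mem_image.1 hy
    exact two_div_le_dist_gridNode fun hji => by
      have := (mem_filter.1 hj).2; have := (mem_filter.1 hi).2; omega
  rw [integral_eq, le_div_iff₀ (by positivity), ← sum_choose_filter_mod_two hn two_pos, mul_sum]
  exact sum_le_sum fun j hj => by
    rw [mul_comm]; exact mul_le_mul_of_nonneg_left (hgap j hj) (by positivity)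

theorem integral_infDist_support_eq_zero (n r : ℕ) :
    ∫ x, infDist x (gridParitySupport n r) ∂gridParityMeasure n r = 0 := by
  rw [integral_eq, div_eq_zero_iff]
  exact .inl <| sum_eq_zero fun j hj => by
    rw [infDist_zero_of_mem (gridNode_mem_gridParitySupport hj), mul_zero]

end gridParityMeasure

open gridParityMeasure in
/-- Proposition 1.7. For every even `k ≥ 4` there are probability measures
`p, q` on `ℝ`, each supported on at most `k/2` points of `[-1, 1]`, whose first `k - 2`
moments agree, yet some `1`-Lipschitz function separates them by more than `1/(2k)`
(equivalently `W₁(p, q) > 1/(2k)`). -/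
theorem stmt_9 (k : ℕ) (hk : Even k) (hk4 : 4 ≤ k) :
    ∃ p q : Measure ℝ, IsProbabilityMeasure p ∧ IsProbabilityMeasure q ∧
      (∃ s : Finset ℝ, s.card ≤ k / 2 ∧ (s : Set ℝ) ⊆ Set.Icc (-1) 1 ∧
        p ((s : Set ℝ))ᶜ = 0) ∧
      (∃ s : Finset ℝ, s.card ≤ k / 2 ∧ (s : Set ℝ) ⊆ Set.Icc (-1) 1 ∧
        q ((s : Set ℝ))ᶜ = 0) ∧
      (∀ ℓ : ℕ, 1 ≤ ℓ → ℓ ≤ k - 2 → (∫ x, x ^ ℓ ∂p) = ∫ x, x ^ ℓ ∂q) ∧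
      ∃ f : ℝ → ℝ, LipschitzWith 1 f ∧
        1 / (2 * k : ℝ) < (∫ x, f x ∂p) - ∫ x, f x ∂q := by
  have hn : 0 < k - 1 := by omega
  have hcard : (k - 1 + 2) / 2 = k / 2 := by obtain ⟨m, rfl⟩ := hk; omega
  have hk1 : ((k - 1 : ℕ) : ℝ) = k - 1 := by norm_num [Nat.cast_sub (by omega : 1 ≤ k)]
  have hgap : 1 / (2 * k : ℝ) < 2 / (k - 1 : ℕ) := by
    have : (4 : ℝ) ≤ k := by exact_mod_cast hk4
    rw [hk1, div_lt_div_iff₀ (by positivity) (by linarith)]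
    linarith
  refine ⟨gridParityMeasure (k - 1) 0, gridParityMeasure (k - 1) 1,
    isProbabilityMeasure hn (by norm_num), isProbabilityMeasure hn (by norm_num),
    ⟨_, hcard ▸ card_support_le _ 0, support_subset_Icc hn 0, apply_compl_support _ 0⟩,
    ⟨_, hcard ▸ card_support_le _ 1, support_subset_Icc hn 1, apply_compl_support _ 1⟩,
    fun ℓ _ hℓ => ?_, _, lipschitz_infDist_pt (gridParitySupport (k - 1) 1), ?_⟩
  · simpa using integral_eval_eq (P := X ^ ℓ) (n := k - 1) (by rw [natDegree_X_pow]; omega)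
  · rw [integral_infDist_support_eq_zero, sub_zero]
    exact hgap.trans_le (two_div_le_integral_infDist hn)
end

section
/- Let a = (a_1,…,a_d) and b = (b_1,…,b_d) be nondecreasing vectors of real numbers (a_i ≤ a_{i+1} and b_i ≤ b_{i+1} for all i). Then: (i) for every function f : ℝ → ℝ that is Lipschitz with constant 1, |Σ_{i=1}^d f(a_i) − Σ_{i=1}^d f(b_i)| ≤ Σ_{i=1}^d |a_i − b_i|; and (ii) there exists a function f : ℝ → ℝ that is Lipschitz with constant 1 achieving equality, i.e., Σ_{i=1}^d f(a_i) − Σ_{i=1}^d f(b_i) = Σ_{i=1}^d |a_i − b_i|. (Equivalently, the L₁ distance between the sorted vectors equals d times the Wasserstein-1 distance between the two uniform point-mass distributions p_a and p_b placing mass 1/d at each a_i and each b_i respectively.) -/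
open MeasureTheory Finset

/-
Part (i) is the triangle inequality applied termwise. For (ii), let `N_c(t)` count the entries of
`c` below `t`. For sorted vectors, every `t` strictly between `b i` and `a i` separates the two
counts: if `b i < t ≤ a i` then `N_a(t) ≤ i < N_b(t)`, and symmetrically. So the primitive `f` of
`t ↦ (1 if N_a(t) < N_b(t) else -1)` is `1`-Lipschitz and has slope `sign (a i - b i)` on the whole
segment between `b i` and `a i`, whence `f (a i) - f (b i) = |a i - b i|` for every `i`.
-/

theorem abs_sum_sub_sum_le_of_lipschitzWith {ι : Type*} [Fintype ι] {K : NNReal} {f : ℝ → ℝ}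
    (hf : LipschitzWith K f) (a b : ι → ℝ) :
    |∑ i, f (a i) - ∑ i, f (b i)| ≤ K * ∑ i, |a i - b i| :=
  calc |∑ i, f (a i) - ∑ i, f (b i)| = |∑ i, (f (a i) - f (b i))| := by
        rw [sum_sub_distrib]
    _ ≤ ∑ i, |f (a i) - f (b i)| := abs_sum_le_sum_abs _ _
    _ ≤ ∑ i, K * |a i - b i| := sum_le_sum fun i _ => by
        simpa only [Real.dist_eq] using hf.dist_le_mul (a i) (b i)
    _ = K * ∑ i, |a i - b i| := (mul_sum _ _ _).symm

theorem intervalIntegrable_of_norm_le {g : ℝ → ℝ} {C : ℝ} (hg : Measurable g)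
    (hgC : ∀ t, ‖g t‖ ≤ C) (x y : ℝ) : IntervalIntegrable g volume x y :=
  (intervalIntegrable_const (c := C)).mono_fun hg.aestronglyMeasurable
    (ae_of_all _ fun t => (hgC t).trans (le_abs_self C))

theorem lipschitzWith_integral_of_norm_le {g : ℝ → ℝ} {K : NNReal} (hg : Measurable g)
    (hgK : ∀ t, ‖g t‖ ≤ K) (x₀ : ℝ) : LipschitzWith K fun x => ∫ t in x₀..x, g t := by
  refine LipschitzWith.of_dist_le_mul fun x y => ?_
  have hint := intervalIntegrable_of_norm_le hg hgK
  rw [Real.dist_eq, Real.dist_eq, intervalIntegral.integral_interval_sub_left (hint _ _) (hint _ _),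
    ← Real.norm_eq_abs]
  exact intervalIntegral.norm_integral_le_of_norm_le_const fun t _ => hgK t

theorem intervalIntegral_eq_abs_sub {g : ℝ → ℝ} {x y : ℝ} (hpos : ∀ t ∈ Set.Ioc y x, g t = 1)
    (hneg : ∀ t ∈ Set.Ioc x y, g t = -1) : ∫ t in y..x, g t = |x - y| := by
  rcases le_total y x with hyx | hxy
  · rw [intervalIntegral.integral_congr_ae (g := fun _ => (1 : ℝ))
      (ae_of_all _ fun t ht => hpos t (Set.uIoc_of_le hyx ▸ ht)),
      intervalIntegral.integral_const, smul_eq_mul, mul_one, abs_of_nonneg (sub_nonneg.2 hyx)]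
  · rw [intervalIntegral.integral_congr_ae (g := fun _ => (-1 : ℝ))
      (ae_of_all _ fun t ht => hneg t (Set.uIoc_of_ge hxy ▸ ht)),
      intervalIntegral.integral_const, smul_eq_mul, abs_of_nonpos (sub_nonpos.2 hxy)]
    ring

section Counting

variable {ι : Type*} [Fintype ι]

noncomputable def countBelow (c : ι → ℝ) (t : ℝ) : ℕ := #{j | c j < t}

theorem monotone_countBelow (c : ι → ℝ) : Monotone (countBelow c) := fun _ _ hst =>
  card_le_card fun _ hj => mem_filter.2 ⟨mem_univ _, (mem_filter.1 hj).2.trans_le hst⟩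

variable [LinearOrder ι] [LocallyFiniteOrderBot ι] {c : ι → ℝ}

theorem countBelow_le_card_Iio (hc : Monotone c) {i : ι} {t : ℝ} (ht : t ≤ c i) :
    countBelow c t ≤ #(Iio i) :=
  card_le_card fun _ hj => mem_Iio.2 <| lt_of_not_ge fun hij =>
    ((mem_filter.1 hj).2.trans_le ht).not_ge (hc hij)

theorem card_Iio_lt_countBelow (hc : Monotone c) {i : ι} {t : ℝ} (ht : c i < t) :
    #(Iio i) < countBelow c t :=
  calc #(Iio i) < #(Iic i) := card_lt_card <|
        (ssubset_iff_of_subset Iio_subset_Iic_self).2 ⟨i, mem_Iic.2 le_rfl, notMem_Iio_self⟩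
    _ ≤ countBelow c t := card_le_card fun _ hj =>
      mem_filter.2 ⟨mem_univ _, (hc (mem_Iic.1 hj)).trans_lt ht⟩

end Counting

section Potential

variable {ι : Type*} [Fintype ι]

noncomputable def countSign (a b : ι → ℝ) (t : ℝ) : ℝ :=
  if countBelow a t < countBelow b t then 1 else -1

noncomputable def kantorovichPotential (a b : ι → ℝ) (x : ℝ) : ℝ := ∫ t in 0..x, countSign a b t

theorem measurable_countSign (a b : ι → ℝ) : Measurable (countSign a b) :=
  Measurable.ite (measurableSet_lt (monotone_countBelow a).measurable
    (monotone_countBelow b).measurable) measurable_const measurable_const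

theorem norm_countSign_le (a b : ι → ℝ) (t : ℝ) : ‖countSign a b t‖ ≤ (1 : NNReal) := by
  unfold countSign; split_ifs <;> simp

theorem lipschitzWith_kantorovichPotential (a b : ι → ℝ) :
    LipschitzWith 1 (kantorovichPotential a b) :=
  lipschitzWith_integral_of_norm_le (measurable_countSign a b) (norm_countSign_le a b) 0

variable [LinearOrder ι] [LocallyFiniteOrderBot ι] {a b : ι → ℝ}

theorem kantorovichPotential_sub_eq_abs (ha : Monotone a) (hb : Monotone b) (i : ι) :
    kantorovichPotential a b (a i) - kantorovichPotential a b (b i) = |a i - b i| := by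
  have hint := intervalIntegrable_of_norm_le (measurable_countSign a b) (norm_countSign_le a b)
  refine (intervalIntegral.integral_interval_sub_left (hint 0 _) (hint 0 _)).trans
    (intervalIntegral_eq_abs_sub (fun t ht => ?_) fun t ht => ?_)
  · exact if_pos ((countBelow_le_card_Iio ha ht.2).trans_lt (card_Iio_lt_countBelow hb ht.1))
  · exact if_neg ((countBelow_le_card_Iio hb ht.2).trans (card_Iio_lt_countBelow ha ht.1).le).not_gt

end Potential

/-- Fact 3.2. For nondecreasing vectors `a, b ∈ ℝ^d`: (i) every
`1`-Lipschitz `f` satisfies `|∑ f(a i) − ∑ f(b i)| ≤ ∑ |a i − b i|`, and (ii) some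
`1`-Lipschitz `f` attains equality; i.e. the `L₁` distance between the sorted vectors equals
`d` times the Wasserstein-1 distance between the associated uniform point-mass measures. -/
theorem stmt_10 {d : ℕ} (a b : Fin d → ℝ) (ha : Monotone a) (hb : Monotone b) :
    (∀ f : ℝ → ℝ, LipschitzWith 1 f →
      |(∑ i, f (a i)) - ∑ i, f (b i)| ≤ ∑ i, |a i - b i|) ∧
    ∃ f : ℝ → ℝ, LipschitzWith 1 f ∧
      (∑ i, f (a i)) - (∑ i, f (b i)) = ∑ i, |a i - b i| := by
  refine ⟨fun f hf => ?_, kantorovichPotential a b, lipschitzWith_kantorovichPotential a b, ?_⟩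
  · simpa using abs_sum_sub_sum_le_of_lipschitzWith hf a b
  · rw [← sum_sub_distrib]
    exact sum_congr rfl fun i _ => kantorovichPotential_sub_eq_abs ha hb i
end

section
/- Let p be a Borel probability measure on ℝ supported in a compact interval [a, b], let d ≥ 1 be an integer, and for i = 1,…,d let λ_i be the i-th (d+1)-quantile of p, that is, λ_i = min{ x : p((−∞, x]) ≥ i/(d+1) }. Then for every function f : ℝ → ℝ that is Lipschitz with constant 1, |∫ f dp − (1/d) Σ_{i=1}^d f(λ_i)| ≤ (b − a)/d; that is, the Wasserstein-1 distance between p and the measure placing mass 1/d at each λ_i is at most (b−a)/d. -/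
/-! Pushing Lebesgue measure on `(0, 1]` forward by the quantile function `Q` of `p` gives `p`,
so `∫ f dp = ∫₀¹ f (Q t) dt` and `λᵢ = Q (i / (d + 1))`. Compare `f (Q t)` with `f λᵢ` on the
piece `((i - 1) / d, i / d]`: with `c = d / (d + 1)`, both `t` and `i / (d + 1)` lie in
`[c t, c t + 1 - c]`, so by monotonicity of `Q` the error is at most
`∫₀¹ (Q (c t + 1 - c) - Q (c t)) dt = (∫_c^1 Q - ∫_0^{1-c} Q) / c`,
which is at most `(1 - c) (b - a) / c = (b - a) / d`.
-/

open MeasureTheory Set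

lemma intervalIntegrable_comp_mul_add {g : ℝ → ℝ} (hg : IntervalIntegrable g volume 0 1)
    {c e : ℝ} (hc : 0 < c) (he : 0 ≤ e) (hce : c + e ≤ 1) :
    IntervalIntegrable (fun t ↦ g (c * t + e)) volume 0 1 := by
  have hsub : IntervalIntegrable g volume e (c + e) :=
    hg.mono_set <|
      uIcc_subset_uIcc (mem_uIcc_of_le he (by linarith)) (mem_uIcc_of_le (by linarith) hce)
  simpa [hc.ne'] using (hsub.comp_add_right e).comp_mul_left (c := c)

lemma intervalIntegral_comp_mul_add_sub_le {g : ℝ → ℝ} {a b c : ℝ}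
    (hg : IntervalIntegrable g volume 0 1) (hbd : MapsTo g (Ioc 0 1) (Icc a b))
    (hc0 : 0 < c) (hc1 : c ≤ 1) :
    ∫ t in (0)..1, (g (c * t + (1 - c)) - g (c * t)) ≤ (1 - c) / c * (b - a) := by
  have hint : ∀ {u v : ℝ}, u ∈ Icc (0 : ℝ) 1 → v ∈ Icc (0 : ℝ) 1 →
      IntervalIntegrable g volume u v := fun hu hv ↦
    hg.mono_set (uIcc_subset_uIcc (mem_uIcc_of_le hu.1 hu.2) (mem_uIcc_of_le hv.1 hv.2))
  have h0 : (0 : ℝ) ∈ Icc (0 : ℝ) 1 := ⟨le_rfl, zero_le_one⟩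
  have h1 : (1 : ℝ) ∈ Icc (0 : ℝ) 1 := ⟨zero_le_one, le_rfl⟩
  have hc : c ∈ Icc (0 : ℝ) 1 := ⟨hc0.le, hc1⟩
  have hc' : 1 - c ∈ Icc (0 : ℝ) 1 := ⟨by linarith, by linarith⟩
  have hupper : ∫ t in c..1, g t ≤ (1 - c) * b := by
    calc ∫ t in c..1, g t ≤ ∫ _ in c..1, b :=
          intervalIntegral.integral_mono_on_of_le_Ioo hc1 (hint hc h1) intervalIntegrable_const
            fun t ht ↦ (hbd ⟨hc0.trans ht.1, ht.2.le⟩).2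
      _ = (1 - c) * b := by simp
  have hlower : (1 - c) * a ≤ ∫ t in (0)..(1 - c), g t := by
    calc (1 - c) * a = ∫ _ in (0)..(1 - c), a := by simp
      _ ≤ ∫ t in (0)..(1 - c), g t :=
          intervalIntegral.integral_mono_on_of_le_Ioo hc'.1 intervalIntegrable_const
            (hint h0 hc') fun t ht ↦ (hbd ⟨ht.1, ht.2.le.trans hc'.2⟩).1
  rw [intervalIntegral.integral_sub (intervalIntegrable_comp_mul_add hg hc0 hc'.1 (by linarith))
      (by simpa using intervalIntegrable_comp_mul_add hg hc0 le_rfl (by linarith)),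
    intervalIntegral.integral_comp_mul_add (fun t ↦ g t) hc0.ne',
    intervalIntegral.integral_comp_mul_left (fun t ↦ g t) hc0.ne']
  simp only [mul_zero, mul_one, zero_add, add_sub_cancel, smul_eq_mul]
  -- `∫_{1-c}^1 g - ∫_0^c g = ∫_c^1 g - ∫_0^{1-c} g`, whichever of `c`, `1 - c` is larger
  rw [← intervalIntegral.integral_add_adjacent_intervals (hint hc' hc) (hint hc h1),
    ← intervalIntegral.integral_add_adjacent_intervals (hint h0 hc') (hint hc' hc)]
  rw [← mul_sub, inv_mul_eq_div, div_mul_eq_mul_div]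
  gcongr
  linarith

lemma abs_intervalIntegral_sub_sum_le {φ h : ℝ → ℝ} {y : ℕ → ℝ} {d : ℕ} (hd : 0 < d)
    (hφ : IntervalIntegrable φ volume 0 1) (hh : IntervalIntegrable h volume 0 1)
    (hle : ∀ i < d, ∀ t ∈ Ioc (i / d : ℝ) ((i + 1) / d), |φ t - y i| ≤ h t) :
    |(∫ t in (0)..1, φ t) - (1 / d) * ∑ i ∈ Finset.range d, y i| ≤ ∫ t in (0)..1, h t := by
  have hd' : (0 : ℝ) < d := by exact_mod_cast hd
  set x : ℕ → ℝ := fun i ↦ i / d with hx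
  have hx_mono : ∀ i, x i ≤ x (i + 1) := fun i ↦ by simp only [hx]; gcongr; simp
  have hx_mem : ∀ i ≤ d, x i ∈ uIcc (0 : ℝ) 1 := fun i hi ↦
    mem_uIcc_of_le (by positivity) (div_le_one_of_le₀ (by exact_mod_cast hi) hd'.le)
  have hpiece : ∀ {g : ℝ → ℝ}, IntervalIntegrable g volume 0 1 →
      ∀ i < d, IntervalIntegrable g volume (x i) (x (i + 1)) := fun hg i hi ↦
    hg.mono_set (uIcc_subset_uIcc (hx_mem i hi.le) (hx_mem (i + 1) hi))
  have hsplit : ∀ {g : ℝ → ℝ}, IntervalIntegrable g volume 0 1 →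
      ∫ t in (0)..1, g t = ∑ i ∈ Finset.range d, ∫ t in x i..x (i + 1), g t := fun hg ↦ by
    rw [intervalIntegral.sum_integral_adjacent_intervals (hpiece hg)]
    simp [hx, hd'.ne']
  have hconst : ∀ i, 1 / (d : ℝ) * y i = ∫ _ in x i..x (i + 1), y i := fun i ↦ by
    simp only [hx, intervalIntegral.integral_const, smul_eq_mul]
    congr 1
    push_cast
    ring
  rw [hsplit hφ, hsplit hh, Finset.mul_sum, ← Finset.sum_sub_distrib]
  refine (Finset.abs_sum_le_sum_abs _ _).trans (Finset.sum_le_sum fun i hi ↦ ?_)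
  have hi := Finset.mem_range.mp hi
  rw [hconst, ← intervalIntegral.integral_sub (hpiece hφ i hi) intervalIntegrable_const,
    ← Real.norm_eq_abs]
  refine intervalIntegral.norm_integral_le_of_norm_le (hx_mono i) ?_ (hpiece hh i hi)
  exact ae_of_all _ fun t ht ↦ by simpa using hle i hi t (by simpa [hx] using ht)

namespace ProbabilityTheory

/-- Only meaningful for `t ∈ (0, 1]`: e.g. `quantile p 0 = sInf univ = 0`. -/
noncomputable def quantile (p : Measure ℝ) (t : ℝ) : ℝ := sInf {x | t ≤ cdf p x}

section SupportedInIcc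

variable {p : Measure ℝ} [IsProbabilityMeasure p] {a b : ℝ}

lemma cdf_eq_one_of_measure_compl_Icc (hsupp : p (Icc a b)ᶜ = 0) : cdf p b = 1 := by
  have hIic : p (Iic b) = 1 := by
    rw [← prob_compl_eq_zero_iff measurableSet_Iic]
    exact measure_mono_null (compl_subset_compl.2 Icc_subset_Iic_self) hsupp
  rw [cdf_eq_real, measureReal_def, hIic, ENNReal.toReal_one]

lemma cdf_eq_zero_of_measure_compl_Icc (hsupp : p (Icc a b)ᶜ = 0) {x : ℝ} (hx : x < a) :
    cdf p x = 0 := by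
  have hIic : p (Iic x) = 0 :=
    measure_mono_null
      (fun y (hy : y ≤ x) (hy' : y ∈ Icc a b) ↦ (hy'.1.trans hy).not_gt hx) hsupp
  rw [cdf_eq_real, measureReal_def, hIic, ENNReal.toReal_zero]

lemma quantile_le_iff (hsupp : p (Icc a b)ᶜ = 0) {t x : ℝ} (ht : t ∈ Ioc 0 1) :
    quantile p t ≤ x ↔ t ≤ cdf p x := by
  have hne : {x | t ≤ cdf p x}.Nonempty :=
    ⟨b, by simpa [cdf_eq_one_of_measure_compl_Icc hsupp] using ht.2⟩
  have hbdd : a ∈ lowerBounds {x | t ≤ cdf p x} := fun y hy ↦ by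
    by_contra! hya
    exact ht.1.not_ge (by simpa [cdf_eq_zero_of_measure_compl_Icc hsupp hya] using hy)
  have hmem : t ≤ cdf p (quantile p t) := by
    have hright : ∀ y ∈ Ioi (quantile p t), t ≤ cdf p y := fun y hy ↦ by
      obtain ⟨z, hz, hzy⟩ := (csInf_lt_iff ⟨a, hbdd⟩ hne).1 hy
      exact hz.trans ((cdf p).mono hzy.le)
    exact ge_of_tendsto (((cdf p).right_continuous _).mono Ioi_subset_Ici_self).tendsto
      (eventually_nhdsWithin_of_forall hright)
  exact ⟨fun h ↦ hmem.trans ((cdf p).mono h), fun h ↦ csInf_le ⟨a, hbdd⟩ h⟩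

lemma quantile_mem_Icc (hsupp : p (Icc a b)ᶜ = 0) {t : ℝ} (ht : t ∈ Ioc 0 1) :
    quantile p t ∈ Icc a b := by
  refine ⟨le_of_not_gt fun hlt ↦ ?_, (quantile_le_iff hsupp ht).2 ?_⟩
  · have := (quantile_le_iff hsupp ht).1 le_rfl
    rw [cdf_eq_zero_of_measure_compl_Icc hsupp hlt] at this
    exact ht.1.not_ge this
  · rw [cdf_eq_one_of_measure_compl_Icc hsupp]
    exact ht.2

lemma quantile_monotoneOn (hsupp : p (Icc a b)ᶜ = 0) : MonotoneOn (quantile p) (Ioc 0 1) :=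
  fun _ hs _ ht hst ↦
    (quantile_le_iff hsupp hs).2 (hst.trans ((quantile_le_iff hsupp ht).1 le_rfl))

lemma aemeasurable_quantile (hsupp : p (Icc a b)ᶜ = 0) :
    AEMeasurable (quantile p) (volume.restrict (Ioc 0 1)) :=
  aemeasurable_restrict_of_monotoneOn measurableSet_Ioc (quantile_monotoneOn hsupp)

lemma map_quantile (hsupp : p (Icc a b)ᶜ = 0) :
    (volume.restrict (Ioc 0 1)).map (quantile p) = p := by
  have hQ := aemeasurable_quantile hsupp
  have : IsProbabilityMeasure (volume.restrict (Ioc (0 : ℝ) 1)) := ⟨by simp⟩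
  have := Measure.isProbabilityMeasure_map hQ
  refine Measure.ext_of_Iic _ _ fun x ↦ ?_
  have hpre : quantile p ⁻¹' Iic x ∩ Ioc 0 1 = Ioc 0 (cdf p x) := by
    ext t
    simp only [mem_inter_iff, mem_preimage, mem_Iic]
    exact ⟨fun ⟨hx, ht⟩ ↦ ⟨ht.1, (quantile_le_iff hsupp ht).1 hx⟩,
      fun ht ↦ ⟨(quantile_le_iff hsupp ⟨ht.1, ht.2.trans (cdf_le_one p x)⟩).2 ht.2,
        ht.1, ht.2.trans (cdf_le_one p x)⟩⟩
  rw [Measure.map_apply_of_aemeasurable hQ measurableSet_Iic,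
    Measure.restrict_apply' measurableSet_Ioc, hpre, Real.volume_Ioc, sub_zero, ofReal_cdf]

lemma intervalIntegral_comp_quantile (hsupp : p (Icc a b)ᶜ = 0) {f : ℝ → ℝ}
    (hf : Continuous f) : ∫ x, f x ∂p = ∫ t in (0)..1, f (quantile p t) := by
  rw [intervalIntegral.integral_of_le zero_le_one, ← integral_map (aemeasurable_quantile hsupp)
    hf.aestronglyMeasurable, map_quantile hsupp]

lemma intervalIntegrable_comp_quantile (hsupp : p (Icc a b)ᶜ = 0) {f : ℝ → ℝ}
    (hf : Continuous f) : IntervalIntegrable (fun t ↦ f (quantile p t)) volume 0 1 := by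
  have hfp : Integrable f p := by
    simpa using (hf.continuousOn.integrableOn_compact isCompact_Icc (μ := p)).congr_set_ae
      (ae_eq_univ.2 hsupp).symm
  rw [← map_quantile hsupp, integrable_map_measure hf.aestronglyMeasurable
    (aemeasurable_quantile hsupp)] at hfp
  exact (intervalIntegrable_iff_integrableOn_Ioc_of_le zero_le_one).2 hfp

lemma abs_quantile_sub_quantile_le (hsupp : p (Icc a b)ᶜ = 0) {d i : ℕ} (hi : i < d) {t : ℝ}
    (ht : t ∈ Ioc (i / d : ℝ) ((i + 1) / d)) :
    |quantile p t - quantile p ((i + 1) / (d + 1))| ≤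
      quantile p (d / (d + 1) * t + (1 - d / (d + 1))) - quantile p (d / (d + 1) * t) := by
  have hd : (0 : ℝ) < d := by exact_mod_cast (Nat.zero_le i).trans_lt hi
  have hid : (i : ℝ) + 1 ≤ d := by exact_mod_cast hi
  have hlo : (i : ℝ) < d * t := by rw [← div_lt_iff₀' hd]; exact ht.1
  have hhi : d * t ≤ (i : ℝ) + 1 := by rw [← le_div_iff₀' hd]; exact ht.2
  have hu : d / (d + 1) * t = d * t / (d + 1) := by ring
  have hv : d / (d + 1) * t + (1 - d / (d + 1)) = (d * t + 1) / (d + 1) := by field_simp; ring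
  have hd1 : (0 : ℝ) < d + 1 := by linarith
  have ht0 : 0 < t := pos_of_mul_pos_right ((Nat.cast_nonneg i).trans_lt hlo) hd.le
  have ht1 : t ≤ 1 := by nlinarith
  rw [hv, hu]
  set u := d * t / (d + 1)
  set v := (d * t + 1) / (d + 1)
  have hu0 : 0 < u := by positivity
  have hv1 : v ≤ 1 := div_le_one_of_le₀ (by linarith) hd1.le
  have hIcc : ∀ x, u ≤ x → x ≤ v → quantile p x ∈ Icc (quantile p u) (quantile p v) :=
    fun x hux hxv ↦
      have hx : x ∈ Ioc 0 1 := ⟨hu0.trans_le hux, hxv.trans hv1⟩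
      ⟨quantile_monotoneOn hsupp ⟨hu0, hux.trans hx.2⟩ hx hux,
        quantile_monotoneOn hsupp hx ⟨hx.1.trans_le hxv, hv1⟩ hxv⟩
  rw [← Real.dist_eq]
  refine Real.dist_le_of_mem_Icc (hIcc t ?_ ?_) (hIcc _ ?_ ?_)
  · rw [div_le_iff₀ hd1]; nlinarith
  · rw [le_div_iff₀ hd1]; nlinarith
  · exact div_le_div_of_nonneg_right hhi hd1.le
  · exact div_le_div_of_nonneg_right (by linarith) hd1.le

end SupportedInIcc

end ProbabilityTheory

open ProbabilityTheory

theorem stmt_11_general (p : Measure ℝ) [IsProbabilityMeasure p] (a b : ℝ)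
    (hsupp : p (Set.Icc a b)ᶜ = 0) (d : ℕ) (hd : 1 ≤ d)
    (lam : Fin d → ℝ)
    (hlam : ∀ i : Fin d,
      IsLeast {x : ℝ | ((i : ℕ) + 1 : ℝ) / (d + 1) ≤ (p (Set.Iic x)).toReal} (lam i)) :
    ∀ f : ℝ → ℝ, LipschitzWith 1 f →
      |(∫ x, f x ∂p) - (1 / d : ℝ) * ∑ i, f (lam i)| ≤ (b - a) / d := by
  intro f hf
  have hf_abs : ∀ x y, |f x - f y| ≤ |x - y| := fun x y ↦ by
    simpa [Real.dist_eq] using hf.dist_le_mul x y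
  have hc0 : (0 : ℝ) < d / (d + 1) := by positivity
  have hc1 : (d : ℝ) / (d + 1) ≤ 1 := div_le_one_of_le₀ (by linarith) (by positivity)
  have hQ : IntervalIntegrable (quantile p) volume 0 1 := by
    simpa using intervalIntegrable_comp_quantile hsupp continuous_id
  have hlam_eq : ∀ i : Fin d, lam i = quantile p ((i + 1) / (d + 1)) := fun i ↦ by
    rw [← (hlam i).csInf_eq]
    simp only [quantile, cdf_eq_real, measureReal_def]
  rw [intervalIntegral_comp_quantile hsupp hf.continuous, Finset.sum_congr rfl fun i _ ↦ by
    rw [hlam_eq i], Fin.sum_univ_eq_sum_range (fun i : ℕ ↦ f (quantile p ((i + 1) / (d + 1))))]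
  calc _ ≤ ∫ t in (0)..1, (quantile p (d / (d + 1) * t + (1 - d / (d + 1))) -
        quantile p (d / (d + 1) * t)) :=
        abs_intervalIntegral_sub_sum_le hd (intervalIntegrable_comp_quantile hsupp hf.continuous)
          ((intervalIntegrable_comp_mul_add hQ hc0 (by linarith) (by linarith)).sub
            (by simpa using intervalIntegrable_comp_mul_add hQ hc0 le_rfl (by linarith)))
          fun i hi t ht ↦ (hf_abs _ _).trans (abs_quantile_sub_quantile_le hsupp hi ht)
    _ ≤ (1 - d / (d + 1)) / (d / (d + 1)) * (b - a) :=
        intervalIntegral_comp_mul_add_sub_le hQ (fun t ht ↦ quantile_mem_Icc hsupp ht) hc0 hc1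
    _ = (b - a) / d := by field_simp; ring

/-- Fact 3.3. Let `p` be a Borel probability measure supported in `[a, b]`
and, for `i = 1, …, d`, let `λ_i` be the `i`-th `(d+1)`-quantile of `p`, i.e. the minimum `x`
with `p((-∞, x]) ≥ i/(d+1)`. Then for every `1`-Lipschitz `f`,
`|∫ f dp − (1/d) ∑ i f(λ_i)| ≤ (b − a)/d`; i.e. the Wasserstein-1 distance between `p` and
the uniform measure on the quantiles is at most `(b − a)/d`. -/
theorem stmt_11 (p : Measure ℝ) [IsProbabilityMeasure p] (a b : ℝ) (hab : a ≤ b)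
    (hsupp : p (Set.Icc a b)ᶜ = 0) (d : ℕ) (hd : 1 ≤ d)
    (lam : Fin d → ℝ)
    (hlam : ∀ i : Fin d,
      IsLeast {x : ℝ | ((i : ℕ) + 1 : ℝ) / (d + 1) ≤ (p (Set.Iic x)).toReal} (lam i)) :
    ∀ f : ℝ → ℝ, LipschitzWith 1 f →
      |(∫ x, f x ∂p) - (1 / d : ℝ) * ∑ i, f (lam i)| ≤ (b - a) / d :=
  stmt_11_general p a b hsupp d hd lam hlam
end

section
/- Let A be a finite nonempty set, let r, ξ ≥ 1 be integers, let h, t : {1,…,ξ} → {1,…,r} be index maps, and let g_1,…,g_ξ : A × A → ℝ. Suppose every index i ∈ {1,…,r} occurs at least four times among the slots, i.e., |{s : h(s) = i}| + |{s : t(s) = i}| ≥ 4 for every i. Then ( Σ_{a : {1,…,r} → A} ∏_{s=1}^ξ g_s(a_{h(s)}, a_{t(s)}) )² ≤ ∏_{s=1}^ξ Σ_{x,y ∈ A} g_s(x, y)². -/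
/-!
Each entry satisfies `|g(x,y)| ≤ ρ(x) σ(y)` with `ρ(x)⁴ = ∑_y g(x,y)²` and `σ(y)⁴ = ∑_x g(x,y)²`,
so that `‖ρ‖₄ ‖σ‖₄ = (∑_{x,y} g(x,y)²)^{1/2}`. After this replacement the sum over `a` factorizes
into one sum per variable, each of a product of at least four nonnegative functions of that
variable. Bounding all but four of these by their sup norm, which is at most their `L⁴` norm, and
the remaining four by Hölder's inequality (Cauchy–Schwarz twice), each such sum is at most the
product of the `L⁴` norms of its factors.
-/

open Finset

noncomputable def l4Norm {A : Type*} [Fintype A] (f : A → ℝ) : ℝ := √(√(∑ x, f x ^ 4))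

noncomputable def rowWeight {A B : Type*} [Fintype B] (g : A → B → ℝ) (x : A) : ℝ :=
  √(√(∑ y, g x y ^ 2))

theorem Real.sqrt_sqrt_pow_four {a : ℝ} (ha : 0 ≤ a) : √(√(a ^ 4)) = a := by
  rw [show a ^ 4 = (a ^ 2) ^ 2 by ring, Real.sqrt_sq (by positivity), Real.sqrt_sq ha]

theorem Real.pow_four_sqrt_sqrt {a : ℝ} (ha : 0 ≤ a) : √(√a) ^ 4 = a := by
  rw [show √(√a) ^ 4 = (√(√a) ^ 2) ^ 2 by ring, Real.sq_sqrt (Real.sqrt_nonneg _),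
    Real.sq_sqrt ha]

section L4

variable {A : Type*} [Fintype A]

theorem l4Norm_nonneg (f : A → ℝ) : 0 ≤ l4Norm f := Real.sqrt_nonneg _

theorem abs_le_l4Norm (f : A → ℝ) (x : A) : |f x| ≤ l4Norm f :=
  calc |f x| = √(√(|f x| ^ 4)) := (Real.sqrt_sqrt_pow_four (abs_nonneg _)).symm
    _ ≤ l4Norm f := by
      rw [pow_abs, abs_of_nonneg (by positivity)]
      exact Real.sqrt_le_sqrt <| Real.sqrt_le_sqrt <|
        single_le_sum (f := fun y => f y ^ 4) (fun y _ => by positivity) (mem_univ x)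

theorem sum_mul_mul_mul_le_l4Norm (f₁ f₂ f₃ f₄ : A → ℝ) :
    ∑ x, f₁ x * f₂ x * (f₃ x * f₄ x)
      ≤ l4Norm f₁ * l4Norm f₂ * (l4Norm f₃ * l4Norm f₄) := by
  have pair (u v : A → ℝ) : √(∑ x, (u x * v x) ^ 2) ≤ l4Norm u * l4Norm v := by
    rw [l4Norm, l4Norm, ← Real.sqrt_mul (Real.sqrt_nonneg _)]
    refine Real.sqrt_le_sqrt ?_
    convert Real.sum_mul_le_sqrt_mul_sqrt univ (fun x => u x ^ 2) (fun x => v x ^ 2) using 4 <;>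
      ring
  calc _ ≤ √(∑ x, (f₁ x * f₂ x) ^ 2) * √(∑ x, (f₃ x * f₄ x) ^ 2) :=
        Real.sum_mul_le_sqrt_mul_sqrt _ _ _
    _ ≤ _ := mul_le_mul (pair f₁ f₂) (pair f₃ f₄) (Real.sqrt_nonneg _)
        (mul_nonneg (l4Norm_nonneg _) (l4Norm_nonneg _))

theorem sum_prod_le_prod_l4Norm_of_card_eq_four {ι : Type*} (f : ι → A → ℝ) {P : Finset ι}
    (hP : #P = 4) : ∑ x, ∏ e ∈ P, f e x ≤ ∏ e ∈ P, l4Norm (f e) := by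
  classical
  obtain ⟨a, b, c, d, hab, hac, had, hbc, hbd, hcd, rfl⟩ := card_eq_four.mp hP
  simp only [prod_insert, mem_insert, mem_singleton, prod_singleton, hab, hac, had, hbc, hbd,
    hcd, or_self, not_false_eq_true, ← mul_assoc]
  simpa only [← mul_assoc] using sum_mul_mul_mul_le_l4Norm (f a) (f b) (f c) (f d)

theorem sum_prod_le_prod_l4Norm {ι : Type*} (f : ι → A → ℝ) {E : Finset ι}
    (hf : ∀ e ∈ E, ∀ x, 0 ≤ f e x) (hE : 4 ≤ #E) :
    ∑ x, ∏ e ∈ E, f e x ≤ ∏ e ∈ E, l4Norm (f e) := by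
  classical
  obtain ⟨P, hPE, hP⟩ := exists_subset_card_eq hE
  have hsup : ∀ x, ∏ e ∈ E \ P, f e x ≤ ∏ e ∈ E \ P, l4Norm (f e) := fun x =>
    prod_le_prod (fun e he => hf e (sdiff_subset he) x)
      fun e _ => (le_abs_self _).trans (abs_le_l4Norm _ x)
  calc ∑ x, ∏ e ∈ E, f e x = ∑ x, (∏ e ∈ E \ P, f e x) * ∏ e ∈ P, f e x := by
        simp only [prod_sdiff hPE]
    _ ≤ ∑ x, (∏ e ∈ E \ P, l4Norm (f e)) * ∏ e ∈ P, f e x :=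
        sum_le_sum fun x _ => mul_le_mul_of_nonneg_right (hsup x)
          (prod_nonneg fun e he => hf e (hPE he) x)
    _ = (∏ e ∈ E \ P, l4Norm (f e)) * ∑ x, ∏ e ∈ P, f e x := (mul_sum _ _ _).symm
    _ ≤ (∏ e ∈ E \ P, l4Norm (f e)) * ∏ e ∈ P, l4Norm (f e) :=
        mul_le_mul_of_nonneg_left (sum_prod_le_prod_l4Norm_of_card_eq_four f hP)
          (prod_nonneg fun e _ => l4Norm_nonneg _)
    _ = ∏ e ∈ E, l4Norm (f e) := prod_sdiff hPE

end L4

theorem sum_prod_comp_eq_prod_sum_prod_fiberwise {ι κ A R : Type*} [Fintype ι] [Fintype κ]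
    [DecidableEq κ] [Fintype A] [CommSemiring R] (v : ι → κ) (w : ι → A → R) :
    ∑ a : κ → A, ∏ e, w e (a (v e)) = ∏ i, ∑ x, ∏ e with v e = i, w e x := by
  rw [Fintype.prod_sum]
  refine sum_congr rfl fun a _ => ?_
  rw [← prod_fiberwise univ v]
  exact prod_congr rfl fun i _ => prod_congr rfl fun e he => by rw [(mem_filter.mp he).2]

theorem sum_prod_comp_le_prod_l4Norm {ι κ A : Type*} [Fintype ι] [Fintype κ] [DecidableEq κ]
    [Fintype A] (v : ι → κ) (w : ι → A → ℝ) (hw : ∀ e x, 0 ≤ w e x)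
    (hv : ∀ i, 4 ≤ #{e | v e = i}) :
    ∑ a : κ → A, ∏ e, w e (a (v e)) ≤ ∏ e, l4Norm (w e) := by
  rw [sum_prod_comp_eq_prod_sum_prod_fiberwise, ← prod_fiberwise univ v]
  exact prod_le_prod (fun i _ => sum_nonneg fun x _ => prod_nonneg fun e _ => hw e x)
    fun i _ => sum_prod_le_prod_l4Norm w (fun e _ x => hw e x) (hv i)

section RowWeight

variable {A B : Type*} [Fintype A] [Fintype B]

theorem abs_le_rowWeight_mul_rowWeight_swap (g : A → B → ℝ) (x : A) (y : B) :
    |g x y| ≤ rowWeight g x * rowWeight (Function.swap g) y := by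
  have hrow : g x y ^ 2 ≤ ∑ y', g x y' ^ 2 :=
    single_le_sum (f := fun y' => g x y' ^ 2) (fun _ _ => sq_nonneg _) (mem_univ y)
  have hcol : g x y ^ 2 ≤ ∑ x', g x' y ^ 2 :=
    single_le_sum (f := fun x' => g x' y ^ 2) (fun _ _ => sq_nonneg _) (mem_univ x)
  rw [rowWeight, rowWeight, ← Real.sqrt_mul (Real.sqrt_nonneg _),
    ← Real.sqrt_mul (by positivity)]
  calc |g x y| = √(√(g x y ^ 2 * g x y ^ 2)) := by
        rw [← Real.sqrt_sqrt_pow_four (abs_nonneg (g x y)), ← sq_abs (g x y)]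
        ring_nf
    _ ≤ _ := Real.sqrt_le_sqrt <| Real.sqrt_le_sqrt <|
        mul_le_mul hrow hcol (sq_nonneg _) (by positivity)

theorem l4Norm_rowWeight (g : A → B → ℝ) :
    l4Norm (rowWeight g) = √(√(∑ x, ∑ y, g x y ^ 2)) := by
  simp only [l4Norm, rowWeight]
  congr 2
  exact sum_congr rfl fun x _ => Real.pow_four_sqrt_sqrt (by positivity)

theorem l4Norm_rowWeight_mul_l4Norm_rowWeight_swap (g : A → B → ℝ) :
    l4Norm (rowWeight g) * l4Norm (rowWeight (Function.swap g)) = √(∑ x, ∑ y, g x y ^ 2) := by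
  have hswap : ∑ y, ∑ x, Function.swap g y x ^ 2 = ∑ x, ∑ y, g x y ^ 2 := sum_comm
  rw [l4Norm_rowWeight, l4Norm_rowWeight, hswap]
  exact Real.mul_self_sqrt (Real.sqrt_nonneg _)

end RowWeight

theorem card_filter_sumElim {ι κ : Type*} [Fintype ι] [DecidableEq κ] (h t : ι → κ) (i : κ) :
    #{e | Sum.elim h t e = i} = #{s | h s = i} + #{s | t s = i} := by
  rw [card_filter, card_filter, card_filter, Fintype.sum_sum_type]
  rfl

theorem abs_sum_prod_le_prod_sqrt_sum_sq {ι κ A : Type*} [Fintype ι] [Fintype κ] [DecidableEq κ]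
    [Fintype A] (h t : ι → κ) (g : ι → A → A → ℝ)
    (hocc : ∀ i, 4 ≤ #{s | h s = i} + #{s | t s = i}) :
    |∑ a : κ → A, ∏ s, g s (a (h s)) (a (t s))| ≤ ∏ s, √(∑ x, ∑ y, g s x y ^ 2) := by
  set ρ : ι → A → ℝ := fun s => rowWeight (g s)
  set σ : ι → A → ℝ := fun s => rowWeight (Function.swap (g s))
  calc _ ≤ ∑ a : κ → A, ∏ s, |g s (a (h s)) (a (t s))| := by
        simpa only [abs_prod] using
          abs_sum_le_sum_abs (fun a : κ → A => ∏ s, g s (a (h s)) (a (t s))) univ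
    _ ≤ ∑ a : κ → A, ∏ s, ρ s (a (h s)) * σ s (a (t s)) :=
        sum_le_sum fun a _ => prod_le_prod (fun _ _ => abs_nonneg _)
          fun s _ => abs_le_rowWeight_mul_rowWeight_swap _ _ _
    -- the two endpoints of every slot become separate factors, indexed by `ι ⊕ ι`
    _ = ∑ a : κ → A, ∏ e, Sum.elim ρ σ e (a (Sum.elim h t e)) := by
        simp only [Fintype.prod_sum_type, Sum.elim_inl, Sum.elim_inr, prod_mul_distrib]
    _ ≤ ∏ e, l4Norm (Sum.elim ρ σ e) :=
        sum_prod_comp_le_prod_l4Norm _ _ (by rintro (s | s) x <;> exact Real.sqrt_nonneg _)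
          fun i => (card_filter_sumElim h t i).symm ▸ hocc i
    _ = ∏ s, √(∑ x, ∑ y, g s x y ^ 2) := by
        simp only [Fintype.prod_sum_type, Sum.elim_inl, Sum.elim_inr, ← prod_mul_distrib, ρ, σ,
          l4Norm_rowWeight_mul_l4Norm_rowWeight_swap]

theorem stmt_15_general {A : Type*} [Fintype A]
    (r ξ : ℕ)
    (h t : Fin ξ → Fin r) (g : Fin ξ → A → A → ℝ)
    (hocc : ∀ i : Fin r,
      4 ≤ (Finset.univ.filter fun s => h s = i).card
          + (Finset.univ.filter fun s => t s = i).card) :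
    (∑ a : Fin r → A, ∏ s : Fin ξ, g s (a (h s)) (a (t s))) ^ 2
      ≤ ∏ s : Fin ξ, ∑ x : A, ∑ y : A, g s x y ^ 2 := by
  calc _ = |∑ a : Fin r → A, ∏ s : Fin ξ, g s (a (h s)) (a (t s))| ^ 2 := (sq_abs _).symm
    _ ≤ (∏ s : Fin ξ, √(∑ x : A, ∑ y : A, g s x y ^ 2)) ^ 2 :=
        pow_le_pow_left₀ (abs_nonneg _) (abs_sum_prod_le_prod_sqrt_sum_sq h t g hocc) 2
    _ = _ := by
        rw [← prod_pow]
        exact prod_congr rfl fun s _ => Real.sq_sqrt (by positivity)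

/-- Lemma B.2, generalized Cauchy–Schwarz. Let `A` be a finite nonempty
set, `h, t : Fin ξ → Fin r` index maps, and `g_s : A × A → ℝ`. If every index `i` occurs at
least four times among the argument slots, then
`(∑_{a : Fin r → A} ∏_s g_s(a_{h s}, a_{t s}))² ≤ ∏_s ∑_{x,y ∈ A} g_s(x,y)²`. -/
theorem stmt_15 {A : Type*} [Fintype A] [Nonempty A] [DecidableEq A]
    (r ξ : ℕ) (hr : 1 ≤ r) (hξ : 1 ≤ ξ)
    (h t : Fin ξ → Fin r) (g : Fin ξ → A → A → ℝ)
    (hocc : ∀ i : Fin r,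
      4 ≤ (Finset.univ.filter fun s => h s = i).card
          + (Finset.univ.filter fun s => t s = i).card) :
    (∑ a : Fin r → A, ∏ s : Fin ξ, g s (a (h s)) (a (t s))) ^ 2
      ≤ ∏ s : Fin ξ, ∑ x : A, ∑ y : A, g s x y ^ 2 :=
  stmt_15_general r ξ h t g hocc
end

section
/- There exists an absolute constant C > 0 such that for every integer k ≥ 1 and every function f : ℝ → ℝ that is Lipschitz with constant 1 and satisfies |f(x)| ≤ 1 for all x ∈ [−1, 1], there exists a real polynomial P of degree at most k such that sup_{x ∈ [−1,1]} |f(x) − P(x)| ≤ C/k and the coefficients of P satisfy Σ_j (coefficient of x^j in P)² ≤ C·9^k. -/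
/-!
Write `x = cos θ` and `g = f ∘ cos`, an even, `2π`-periodic, `1`-Lipschitz function of `θ`.
Average `g (θ + t)` against Jackson's kernel `K_n t = (sin (n t / 2) / sin (t / 2)) ^ 4`: it has
mass `≳ n ^ 3` but first absolute moment `∫ |t| K_n t ≲ n ^ 2`, so the average is within
`O(1 / n)` of `g θ`. Since `K_n` is a cosine polynomial of degree `2 n - 2` and `g` is even, the
average is a combination of `cos (l θ) = T_l (cos θ)` with `|l| ≤ 2 n - 2`, i.e. a polynomial of
degree `≤ 2 n - 2` in `x`, with bounded weights. The recurrence `T_{l+2} = 2 X T_{l+1} - T_l`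
bounds the `ℓ¹` norm of the coefficients of `T_l` by `(5 / 2) ^ l`, which dominates the `ℓ²`
norm; as `(5 / 2) ^ 2 < 9`, the choice `n = k / 2 + 1` gives both bounds.
-/

open Real Polynomial Finset intervalIntegral

noncomputable section

namespace JacksonApprox

def coeffL1Norm : AddGroupSeminorm ℝ[X] where
  toFun p := p.sum fun _ a => |a|
  map_zero' := by simp
  add_le' p q := by
    classical
    have hz : ∀ _ : ℕ, |(0 : ℝ)| = 0 := fun _ => abs_zero
    rw [sum_eq_of_subset _ hz support_add, sum_eq_of_subset _ hz subset_union_left,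
      sum_eq_of_subset _ hz subset_union_right, ← sum_add_distrib]
    exact sum_le_sum fun j _ => by rw [coeff_add]; exact abs_add_le _ _
  neg' p := by simp [Polynomial.sum_def]

lemma coeffL1Norm_eq_sum_of_subset {p : ℝ[X]} {s : Finset ℕ} (h : p.support ⊆ s) :
    coeffL1Norm p = ∑ j ∈ s, |p.coeff j| :=
  sum_eq_of_subset _ (fun _ => abs_zero) h

lemma coeffL1Norm_C_mul (c : ℝ) (p : ℝ[X]) : coeffL1Norm (C c * p) = |c| * coeffL1Norm p := by
  rw [← smul_eq_C_mul, coeffL1Norm_eq_sum_of_subset (support_smul c p),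
    coeffL1Norm_eq_sum_of_subset subset_rfl, mul_sum]
  simp only [coeff_smul, smul_eq_mul, abs_mul]

lemma coeffL1Norm_X_mul (p : ℝ[X]) : coeffL1Norm (X * p) = coeffL1Norm p := by
  have hXp : (X * p).support ⊆ range (p.natDegree + 1 + 1) := by
    refine supp_subset_range (natDegree_mul_le.trans_lt ?_)
    rw [natDegree_X]; omega
  rw [coeffL1Norm_eq_sum_of_subset hXp,
    coeffL1Norm_eq_sum_of_subset supp_subset_range_natDegree_succ, sum_range_succ']
  simp only [coeff_X_mul, coeff_X_mul_zero, abs_zero, add_zero]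

lemma coeffL1Norm_sum_le {ι : Type*} (s : Finset ι) (p : ι → ℝ[X]) :
    coeffL1Norm (∑ i ∈ s, p i) ≤ ∑ i ∈ s, coeffL1Norm (p i) :=
  le_sum_of_subadditive coeffL1Norm (map_zero _).le (map_add_le_add _) s p

lemma sum_sq_coeff_le_sq_coeffL1Norm (p : ℝ[X]) :
    ∑ j ∈ p.support, p.coeff j ^ 2 ≤ coeffL1Norm p ^ 2 := by
  simp_rw [← sq_abs (p.coeff _)]
  exact sum_sq_le_sq_sum_of_nonneg fun _ _ => abs_nonneg _

lemma coeffL1Norm_T_le : ∀ n : ℕ, coeffL1Norm (Chebyshev.T ℝ n) ≤ (5 / 2) ^ n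
  | 0 => by simp [coeffL1Norm_eq_sum_of_subset supp_subset_range_natDegree_succ]
  | 1 => by
    norm_num [coeffL1Norm_eq_sum_of_subset supp_subset_range_natDegree_succ, sum_range_succ,
      coeff_X]
  | n + 2 => by
    have hT : Chebyshev.T ℝ ↑(n + 2) = C 2 * (X * Chebyshev.T ℝ ↑(n + 1)) - Chebyshev.T ℝ n := by
      rw [show ((n + 2 : ℕ) : ℤ) = n + 2 by push_cast; ring, Chebyshev.T_add_two]
      push_cast; rw [C_ofNat]; ring
    calc coeffL1Norm (Chebyshev.T ℝ ↑(n + 2))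
        ≤ 2 * coeffL1Norm (Chebyshev.T ℝ ↑(n + 1)) + coeffL1Norm (Chebyshev.T ℝ n) := by
          rw [hT]
          refine (map_sub_le_add _ _ _).trans_eq ?_
          rw [coeffL1Norm_C_mul, coeffL1Norm_X_mul, abs_two]
      _ ≤ 2 * (5 / 2) ^ (n + 1) + (5 / 2) ^ n := by
          gcongr <;> exact coeffL1Norm_T_le _
      _ ≤ (5 / 2) ^ (n + 2) := by
          -- `c = 5 / 2` satisfies `2 c + 1 ≤ c ^ 2`
          linarith [show (5 / 2 : ℝ) ^ (n + 2) = 25 / 4 * (5 / 2) ^ n by ring,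
            show (5 / 2 : ℝ) ^ (n + 1) = 5 / 2 * (5 / 2) ^ n by ring,
            pow_pos (by norm_num : (0 : ℝ) < 5 / 2) n]

lemma coeffL1Norm_T_le_natAbs (m : ℤ) : coeffL1Norm (Chebyshev.T ℝ m) ≤ (5 / 2) ^ m.natAbs := by
  rw [← Chebyshev.T_natAbs]
  exact coeffL1Norm_T_le _

def fejerCoeff (n m : ℕ) : ℝ := if m = 0 then n else 2 * ((n : ℝ) - m)

/-- `n` times the Fejér kernel. -/
def fejer (n : ℕ) (t : ℝ) : ℝ := ∑ m ∈ range n, fejerCoeff n m * cos (m * t)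

def dirichlet (n : ℕ) (t : ℝ) : ℝ := ∑ m ∈ range (n + 1), (if m = 0 then 1 else 2) * cos (m * t)

def jacksonKernel (n : ℕ) (t : ℝ) : ℝ := fejer n t ^ 2

lemma fejerCoeff_succ (n m : ℕ) :
    fejerCoeff (n + 1) m = fejerCoeff n m + if m = 0 then 1 else 2 := by
  unfold fejerCoeff
  split_ifs <;> push_cast <;> ring

lemma fejerCoeff_self (n : ℕ) : fejerCoeff n n = 0 := by
  unfold fejerCoeff
  split_ifs with h <;> simp [h]

lemma fejerCoeff_nonneg {n m : ℕ} (h : m ≤ n) : 0 ≤ fejerCoeff n m := by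
  unfold fejerCoeff
  split_ifs
  · positivity
  · have : (m : ℝ) ≤ n := by exact_mod_cast h
    linarith

lemma fejer_succ (n : ℕ) (t : ℝ) : fejer (n + 1) t = fejer n t + dirichlet n t := by
  simp only [fejer, dirichlet, fejerCoeff_succ, add_mul, sum_add_distrib, sum_range_succ _ n,
    fejerCoeff_self, zero_mul]
  ring

lemma sin_mul_dirichlet (n : ℕ) (t : ℝ) :
    sin (t / 2) * dirichlet n t = sin ((2 * n + 1) * (t / 2)) := by
  induction n with
  | zero => simp [dirichlet]
  | succ n ih =>
    rw [dirichlet, sum_range_succ, ← dirichlet, if_neg n.succ_ne_zero, mul_add, ih]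
    have h₁ := sin_add ((n + 1 : ℝ) * t) (t / 2)
    have h₂ := sin_sub ((n + 1 : ℝ) * t) (t / 2)
    rw [show (n + 1 : ℝ) * t + t / 2 = (2 * ↑(n + 1) + 1) * (t / 2) by push_cast; ring] at h₁
    rw [show (n + 1 : ℝ) * t - t / 2 = (2 * n + 1) * (t / 2) by ring] at h₂
    push_cast at h₁ ⊢
    linear_combination h₂ - h₁

lemma dirichlet_zero_right (n : ℕ) : dirichlet n 0 = 2 * n + 1 := by
  induction n with
  | zero => simp [dirichlet]
  | succ n ih =>
    rw [dirichlet, sum_range_succ, ← dirichlet, ih, if_neg n.succ_ne_zero, mul_zero, cos_zero]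
    push_cast
    ring

lemma sin_sq_mul_fejer (n : ℕ) (t : ℝ) : sin (t / 2) ^ 2 * fejer n t = sin (n * (t / 2)) ^ 2 := by
  induction n with
  | zero => simp [fejer]
  | succ n ih =>
    rw [fejer_succ, mul_add, ih, pow_two (sin (t / 2)), mul_assoc, sin_mul_dirichlet,
      show (2 * n + 1) * (t / 2) = n * (t / 2) + t / 2 + n * (t / 2) by ring, Nat.cast_succ,
      add_one_mul]
    simp only [sin_add, cos_add]
    linear_combination -sin (n * (t / 2)) ^ 2 * sin_sq_add_cos_sq (t / 2)

lemma fejer_zero_right (n : ℕ) : fejer n 0 = n ^ 2 := by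
  induction n with
  | zero => simp [fejer]
  | succ n ih =>
    rw [fejer_succ, ih, dirichlet_zero_right]
    push_cast
    ring

lemma sum_fejerCoeff (n : ℕ) : ∑ m ∈ range n, fejerCoeff n m = n ^ 2 := by
  simpa [fejer] using fejer_zero_right n

lemma abs_fejer_le (n : ℕ) (t : ℝ) : |fejer n t| ≤ n ^ 2 := by
  rw [← fejer_zero_right]
  refine (abs_sum_le_sum_abs _ _).trans (sum_le_sum fun m hm => ?_)
  rw [mul_zero, cos_zero, mul_one, abs_mul,
    abs_of_nonneg (fejerCoeff_nonneg (mem_range.1 hm).le)]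
  exact mul_le_of_le_one_right (fejerCoeff_nonneg (mem_range.1 hm).le) (abs_cos_le_one _)

lemma fejer_eq_div (n : ℕ) {t : ℝ} (ht : sin (t / 2) ≠ 0) :
    fejer n t = sin (n * (t / 2)) ^ 2 / sin (t / 2) ^ 2 := by
  rw [eq_div_iff (pow_ne_zero 2 ht), mul_comm, sin_sq_mul_fejer]

lemma continuous_jacksonKernel (n : ℕ) : Continuous (jacksonKernel n) := by
  unfold jacksonKernel fejer
  fun_prop

lemma jacksonKernel_nonneg (n : ℕ) (t : ℝ) : 0 ≤ jacksonKernel n t := sq_nonneg _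

lemma jacksonKernel_neg (n : ℕ) (t : ℝ) : jacksonKernel n (-t) = jacksonKernel n t := by
  simp only [jacksonKernel, fejer, mul_neg, cos_neg]

lemma jacksonKernel_le_pow (n : ℕ) (t : ℝ) : jacksonKernel n t ≤ n ^ 4 := by
  rw [jacksonKernel, ← sq_abs, show (n : ℝ) ^ 4 = (n ^ 2) ^ 2 by ring]
  exact pow_le_pow_left₀ (abs_nonneg _) (abs_fejer_le n t) 2

lemma jacksonKernel_le_div_pow (n : ℕ) {t : ℝ} (ht : 0 < t) (htπ : t ≤ π) :
    jacksonKernel n t ≤ π ^ 4 / t ^ 4 := by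
  have hsin : t / π ≤ sin (t / 2) := by
    convert mul_le_sin (x := t / 2) (by positivity) (by linarith) using 1
    field_simp
  have hsin_pos : 0 < sin (t / 2) := lt_of_lt_of_le (by positivity) hsin
  have hfejer : fejer n t ≤ π ^ 2 / t ^ 2 := by
    rw [fejer_eq_div n hsin_pos.ne', show π ^ 2 / t ^ 2 = 1 / (t / π) ^ 2 by field_simp]
    gcongr
    exact sin_sq_le_one _
  have hfejer0 : 0 ≤ fejer n t := by
    rw [fejer_eq_div n hsin_pos.ne']
    positivity
  calc jacksonKernel n t ≤ (π ^ 2 / t ^ 2) ^ 2 := pow_le_pow_left₀ hfejer0 hfejer 2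
    _ = π ^ 4 / t ^ 4 := by ring

lemma le_jacksonKernel (n : ℕ) {t : ℝ} (ht : 0 < t) (htπ : t ≤ π) (hnt : n * t ≤ π) :
    (2 * n / π) ^ 4 ≤ jacksonKernel n t := by
  have hsin_pos : 0 < sin (t / 2) := sin_pos_of_pos_of_lt_pi (by positivity) (by linarith)
  have hsin_le : sin (t / 2) ≤ t / 2 := sin_le (by positivity)
  have hsin_n : n * t / π ≤ sin (n * (t / 2)) := by
    convert mul_le_sin (x := n * (t / 2)) (by positivity) (by linarith) using 1
    field_simp
  have hfejer : (2 * n / π) ^ 2 ≤ fejer n t := by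
    rw [fejer_eq_div n hsin_pos.ne', show 2 * (n : ℝ) / π = (n * t / π) / (t / 2) by field_simp]
    rw [div_pow]
    gcongr
  calc (2 * n / π) ^ 4 = ((2 * n / π) ^ 2) ^ 2 := by ring
    _ ≤ jacksonKernel n t := pow_le_pow_left₀ (by positivity) hfejer 2

lemma le_integral_jacksonKernel {n : ℕ} (hn : 1 ≤ n) :
    (n : ℝ) ^ 3 / 7 ≤ ∫ t in -π..π, jacksonKernel n t := by
  have hn' : (1 : ℝ) ≤ n := by exact_mod_cast hn
  have h1n : 1 / (n : ℝ) ≤ 1 := by rw [div_le_one (by positivity)]; exact hn'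
  have hπ2 : π ^ 2 ≤ 10 := by nlinarith [pi_lt_d2, pi_pos]
  have hπ4 : π ^ 4 ≤ 112 := by nlinarith
  calc (n : ℝ) ^ 3 / 7 ≤ ∫ _ in (0 : ℝ)..1 / n, (2 * n / π) ^ 4 := by
        rw [integral_const, smul_eq_mul, sub_zero,
          show 1 / (n : ℝ) * (2 * n / π) ^ 4 = 16 * n ^ 3 / π ^ 4 by field_simp; ring,
          div_le_div_iff₀ (by norm_num) (by positivity)]
        nlinarith [pow_pos (show (0 : ℝ) < n by positivity) 3]
    _ ≤ ∫ t in (0 : ℝ)..1 / n, jacksonKernel n t := by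
        refine integral_mono_on_of_le_Ioo (by positivity) intervalIntegrable_const
          ((continuous_jacksonKernel n).intervalIntegrable _ _) fun t ht => ?_
        have htn : n * t ≤ 1 := by
          rw [← le_div_iff₀' (by positivity)]; exact ht.2.le
        exact le_jacksonKernel n ht.1 (by linarith [ht.2, pi_gt_three]) (by linarith [pi_gt_three])
    _ ≤ ∫ t in -π..π, jacksonKernel n t :=
        integral_mono_interval (by linarith [pi_pos]) (by positivity) (by linarith [pi_gt_three])
          (MeasureTheory.ae_of_all _ (jacksonKernel_nonneg n))
          ((continuous_jacksonKernel n).intervalIntegrable _ _)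

lemma intervalIntegrable_abs_mul_jacksonKernel (n : ℕ) (a b : ℝ) :
    IntervalIntegrable (fun t => |t| * jacksonKernel n t) MeasureTheory.volume a b :=
  (continuous_abs.mul (continuous_jacksonKernel n)).intervalIntegrable a b

lemma integral_abs_mul_jacksonKernel_near_le {n : ℕ} (hn : 1 ≤ n) :
    ∫ t in 0..1 / n, |t| * jacksonKernel n t ≤ n ^ 2 / 2 :=
  have hn' : (n : ℝ) ≠ 0 := by positivity
  calc ∫ t in 0..1 / n, |t| * jacksonKernel n t ≤ ∫ t in 0..1 / n, t * n ^ 4 := by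
        refine integral_mono_on (by positivity) (intervalIntegrable_abs_mul_jacksonKernel n _ _)
          ((continuous_id.mul continuous_const).intervalIntegrable _ _) fun t ht => ?_
        rw [abs_of_nonneg ht.1]
        exact mul_le_mul_of_nonneg_left (jacksonKernel_le_pow n t) ht.1
    _ = n ^ 2 / 2 := by
        rw [integral_mul_const, integral_id]
        field_simp
        ring

lemma integral_abs_mul_jacksonKernel_far_le {n : ℕ} (hn : 1 ≤ n) :
    ∫ t in 1 / n..π, |t| * jacksonKernel n t ≤ π ^ 4 * n ^ 2 / 2 := by
  have hn' : (1 : ℝ) ≤ n := by exact_mod_cast hn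
  have hpos : (0 : ℝ) < 1 / n := by positivity
  have h1n : 1 / (n : ℝ) ≤ π := by
    rw [div_le_iff₀ (by positivity)]
    nlinarith [pi_gt_three]
  have h0 : (0 : ℝ) ∉ Set.uIcc (1 / n : ℝ) π := by
    rw [Set.uIcc_of_le h1n]
    exact fun h => by linarith [h.1]
  calc ∫ t in 1 / n..π, |t| * jacksonKernel n t ≤ ∫ t in 1 / n..π, π ^ 4 * t ^ (-3 : ℤ) := by
        refine integral_mono_on h1n (intervalIntegrable_abs_mul_jacksonKernel n _ _)
          ((intervalIntegrable_zpow (Or.inr h0)).const_mul _) fun t ht => ?_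
        have ht0 : 0 < t := hpos.trans_le ht.1
        rw [abs_of_pos ht0, zpow_neg, zpow_ofNat]
        calc t * jacksonKernel n t ≤ t * (π ^ 4 / t ^ 4) :=
              mul_le_mul_of_nonneg_left (jacksonKernel_le_div_pow n ht0 ht.2) ht0.le
          _ = π ^ 4 * (t ^ 3)⁻¹ := by field_simp
    _ = π ^ 4 * ((n ^ 2 - (π ^ 2)⁻¹) / 2) := by
        rw [integral_const_mul, integral_zpow (Or.inr ⟨by norm_num, h0⟩)]
        norm_num
        ring
    _ ≤ π ^ 4 * n ^ 2 / 2 := by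
        have : 0 ≤ (π ^ 2)⁻¹ := by positivity
        nlinarith [pow_pos pi_pos 4]

lemma integral_abs_mul_jacksonKernel_le {n : ℕ} (hn : 1 ≤ n) :
    ∫ t in -π..π, |t| * jacksonKernel n t ≤ 100 * n ^ 2 := by
  have hsymm : ∫ t in -π..0, |t| * jacksonKernel n t = ∫ t in 0..π, |t| * jacksonKernel n t := by
    rw [← neg_zero, ← integral_comp_neg, neg_zero]
    simp only [abs_neg, jacksonKernel_neg]
  have hπ4 : π ^ 4 ≤ 99 := by
    have hπ2 : π ^ 2 ≤ 9.93 := by nlinarith [pi_lt_d2, pi_pos]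
    nlinarith
  have hint := intervalIntegrable_abs_mul_jacksonKernel n
  rw [← integral_add_adjacent_intervals (hint _ 0) (hint 0 _), hsymm,
    ← integral_add_adjacent_intervals (hint 0 (1 / n)) (hint _ _)]
  nlinarith [integral_abs_mul_jacksonKernel_near_le hn, integral_abs_mul_jacksonKernel_far_le hn,
    sq_nonneg (n : ℝ)]

def cosCoeff (g : ℝ → ℝ) (l : ℤ) : ℝ := ∫ s in -π..π, g s * cos (l * s)

section Convolution

variable {g : ℝ → ℝ}

lemma integral_mul_sin_eq_zero (heven : Function.Even g) (c : ℝ) :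
    ∫ s in -π..π, g s * sin (c * s) = 0 := by
  have h := integral_comp_neg (a := -π) (b := π) fun s => g s * sin (c * s)
  simp only [neg_neg, heven _, mul_neg, sin_neg, integral_neg] at h
  linarith

lemma integral_comp_add_mul_cos (hg : Continuous g) (hper : Function.Periodic g (2 * π))
    (heven : Function.Even g) (l : ℤ) (θ : ℝ) :
    ∫ t in -π..π, g (θ + t) * cos (l * t) = cosCoeff g l * cos (l * θ) := by
  set h : ℝ → ℝ := fun s => g s * cos (l * (s - θ))
  have hper' : Function.Periodic h (2 * π) := fun s => by
    simp only [h, hper s, show l * (s + 2 * π - θ) = l * (s - θ) + l * (2 * π) by ring,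
      cos_add_int_mul_two_pi]
  have hcos : Continuous fun s => g s * cos (l * s) * cos (l * θ) := by fun_prop
  have hsin : Continuous fun s => g s * sin (l * s) * sin (l * θ) := by fun_prop
  calc ∫ t in -π..π, g (θ + t) * cos (l * t) = ∫ t in -π..π, h (θ + t) := by
        simp only [h, add_sub_cancel_left]
    _ = ∫ s in -π..π, h s := by
        have := hper'.intervalIntegral_add_eq (θ + -π) (-π)
        rwa [show θ + -π + 2 * π = θ + π by ring, show -π + 2 * π = π by ring,
          ← integral_comp_add_left h θ] at this
    _ = ∫ s in -π..π, (g s * cos (l * s) * cos (l * θ) + g s * sin (l * s) * sin (l * θ)) :=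
        integral_congr fun s _ => by simp only [h, mul_sub, cos_sub]; ring
    _ = cosCoeff g l * cos (l * θ) := by
        rw [integral_add (hcos.intervalIntegrable _ _) (hsin.intervalIntegrable _ _),
          integral_mul_const, integral_mul_const, integral_mul_sin_eq_zero heven, cosCoeff]
        ring

lemma abs_cosCoeff_le {B : ℝ} (hB : ∀ s, |g s| ≤ B) (l : ℤ) : |cosCoeff g l| ≤ 2 * π * B := by
  have h := norm_integral_le_of_norm_le_const (a := -π) (b := π) (C := B)
    (f := fun s => g s * cos (l * s)) fun s _ => by
      rw [Real.norm_eq_abs, abs_mul]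
      exact (mul_le_of_le_one_right (abs_nonneg _) (abs_cos_le_one _)).trans (hB s)
  rwa [Real.norm_eq_abs, show |π - -π| = 2 * π by rw [abs_of_pos (by linarith [pi_pos])]; ring,
    mul_comm B] at h

def cosProdPoly (g : ℝ → ℝ) (m m' : ℕ) : ℝ[X] :=
  C (cosCoeff g ((m : ℤ) + m') / 2) * Chebyshev.T ℝ ((m : ℤ) + m') +
    C (cosCoeff g ((m : ℤ) - m') / 2) * Chebyshev.T ℝ ((m : ℤ) - m')

def jacksonPoly (g : ℝ → ℝ) (n : ℕ) : ℝ[X] :=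
  ∑ m ∈ range n, ∑ m' ∈ range n, C (fejerCoeff n m * fejerCoeff n m') * cosProdPoly g m m'

lemma eval_cosProdPoly (hg : Continuous g) (hper : Function.Periodic g (2 * π))
    (heven : Function.Even g) (m m' : ℕ) (θ : ℝ) :
    (cosProdPoly g m m').eval (cos θ) = ∫ t in -π..π, g (θ + t) * (cos (m * t) * cos (m' * t)) := by
  have hprod : ∀ t, g (θ + t) * (cos (m * t) * cos (m' * t)) =
      g (θ + t) * cos (((m : ℤ) + m' : ℤ) * t) / 2 +
        g (θ + t) * cos (((m : ℤ) - m' : ℤ) * t) / 2 := by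
    intro t
    push_cast
    rw [add_mul, sub_mul, cos_add, cos_sub]
    ring
  have hint : ∀ l : ℤ,
      IntervalIntegrable (fun t => g (θ + t) * cos (l * t) / 2) MeasureTheory.volume (-π) π :=
    fun l => Continuous.intervalIntegrable (by fun_prop) _ _
  rw [integral_congr fun t _ => hprod t, integral_add (hint _) (hint _), integral_div, integral_div,
    integral_comp_add_mul_cos hg hper heven, integral_comp_add_mul_cos hg hper heven]
  simp only [cosProdPoly, eval_add, eval_mul, eval_C, Chebyshev.T_real_cos]
  ring

lemma eval_jacksonPoly (hg : Continuous g) (hper : Function.Periodic g (2 * π))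
    (heven : Function.Even g) (n : ℕ) (θ : ℝ) :
    (jacksonPoly g n).eval (cos θ) = ∫ t in -π..π, g (θ + t) * jacksonKernel n t := by
  have hK : ∀ t, g (θ + t) * jacksonKernel n t = ∑ m ∈ range n, ∑ m' ∈ range n,
      fejerCoeff n m * fejerCoeff n m' * (g (θ + t) * (cos (m * t) * cos (m' * t))) := by
    intro t
    rw [jacksonKernel, fejer, sq, sum_mul_sum, mul_sum]
    exact sum_congr rfl fun m _ => by rw [mul_sum]; exact sum_congr rfl fun m' _ => by ring
  have hint : ∀ (c : ℝ) (m m' : ℕ), Continuous fun t =>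
      c * (g (θ + t) * (cos (m * t) * cos (m' * t))) := fun c m m' => by fun_prop
  rw [integral_congr fun t _ => hK t, integral_finsetSum fun m _ =>
    (continuous_finsetSum _ fun m' _ => hint _ m m').intervalIntegrable _ _]
  simp only [jacksonPoly, eval_finsetSum, eval_mul, eval_C, eval_cosProdPoly hg hper heven]
  refine sum_congr rfl fun m _ => ?_
  rw [integral_finsetSum fun m' _ => (hint _ m m').intervalIntegrable _ _]
  simp only [integral_const_mul]

lemma natDegree_cosProdPoly_le (g : ℝ → ℝ) (m m' : ℕ) :
    (cosProdPoly g m m').natDegree ≤ m + m' := by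
  refine natDegree_add_le_of_degree_le ((natDegree_C_mul_le _ _).trans ?_)
    ((natDegree_C_mul_le _ _).trans ?_) <;> rw [Chebyshev.natDegree_T] <;> omega

lemma natDegree_jacksonPoly_le (g : ℝ → ℝ) (n : ℕ) : (jacksonPoly g n).natDegree ≤ 2 * (n - 1) :=
  natDegree_sum_le_of_forall_le _ _ fun m hm => natDegree_sum_le_of_forall_le _ _ fun m' hm' =>
    (natDegree_C_mul_le _ _).trans <| (natDegree_cosProdPoly_le g m m').trans <| by
      rw [mem_range] at hm hm'; omega

lemma coeffL1Norm_cosProdPoly_le {B : ℝ} (hB : ∀ s, |g s| ≤ B) (m m' : ℕ) :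
    coeffL1Norm (cosProdPoly g m m') ≤ 2 * π * B * (5 / 2) ^ (m + m') := by
  have hterm : ∀ l : ℤ, l.natAbs ≤ m + m' →
      coeffL1Norm (C (cosCoeff g l / 2) * Chebyshev.T ℝ l) ≤ π * B * (5 / 2) ^ (m + m') := by
    intro l hl
    rw [coeffL1Norm_C_mul, abs_div, abs_two]
    have hc : |cosCoeff g l| / 2 ≤ π * B := by linarith [abs_cosCoeff_le hB l]
    exact mul_le_mul hc ((coeffL1Norm_T_le_natAbs l).trans (pow_le_pow_right₀ (by norm_num) hl))
      (apply_nonneg _ _) (by linarith [abs_nonneg (cosCoeff g l)])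
  calc coeffL1Norm (cosProdPoly g m m')
      ≤ π * B * (5 / 2) ^ (m + m') + π * B * (5 / 2) ^ (m + m') :=
        (map_add_le_add _ _ _).trans (add_le_add (hterm _ (by omega)) (hterm _ (by omega)))
    _ = 2 * π * B * (5 / 2) ^ (m + m') := by ring

lemma coeffL1Norm_jacksonPoly_le {B : ℝ} (hB : ∀ s, |g s| ≤ B) (n : ℕ) :
    coeffL1Norm (jacksonPoly g n) ≤ n ^ 4 * (2 * π * B * (5 / 2) ^ (2 * (n - 1))) := by
  set M := 2 * π * B * (5 / 2) ^ (2 * (n - 1))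
  calc coeffL1Norm (jacksonPoly g n)
      ≤ ∑ m ∈ range n, ∑ m' ∈ range n,
          coeffL1Norm (C (fejerCoeff n m * fejerCoeff n m') * cosProdPoly g m m') :=
        (coeffL1Norm_sum_le _ _).trans (sum_le_sum fun m _ => coeffL1Norm_sum_le _ _)
    _ ≤ ∑ m ∈ range n, ∑ m' ∈ range n, fejerCoeff n m * fejerCoeff n m' * M := by
        refine sum_le_sum fun m hm => sum_le_sum fun m' hm' => ?_
        rw [mem_range] at hm hm'
        have ha : 0 ≤ fejerCoeff n m * fejerCoeff n m' :=
          mul_nonneg (fejerCoeff_nonneg hm.le) (fejerCoeff_nonneg hm'.le)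
        rw [coeffL1Norm_C_mul, abs_of_nonneg ha]
        refine mul_le_mul_of_nonneg_left ((coeffL1Norm_cosProdPoly_le hB m m').trans ?_) ha
        have hB0 : 0 ≤ B := (abs_nonneg _).trans (hB 0)
        exact mul_le_mul_of_nonneg_left (pow_le_pow_right₀ (by norm_num) (by omega))
          (mul_nonneg (by positivity) hB0)
    _ = n ^ 4 * M := by
        simp_rw [← sum_mul, ← sum_mul_sum, sum_fejerCoeff]
        ring

end Convolution

lemma abs_integral_mul_sub_integral_le {g K : ℝ → ℝ} (hg : LipschitzWith 1 g) (hK : Continuous K)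
    (hK0 : ∀ t, 0 ≤ K t) {a b : ℝ} (hab : a ≤ b) (θ : ℝ) :
    |(∫ t in a..b, K t) * g θ - ∫ t in a..b, g (θ + t) * K t| ≤ ∫ t in a..b, |t| * K t := by
  have hgc := hg.continuous
  rw [← integral_mul_const,
    ← integral_sub ((by fun_prop : Continuous fun t => K t * g θ).intervalIntegrable _ _)
      ((by fun_prop : Continuous fun t => g (θ + t) * K t).intervalIntegrable _ _)]
  refine (abs_integral_le_integral_abs hab).trans (integral_mono_on hab
    (Continuous.intervalIntegrable (by fun_prop) _ _)
    (Continuous.intervalIntegrable (by fun_prop) _ _)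
    fun t _ => ?_)
  have hlip : |g θ - g (θ + t)| ≤ |t| := by
    simpa [Real.dist_eq, abs_sub_comm] using hg.dist_le_mul θ (θ + t)
  rw [show K t * g θ - g (θ + t) * K t = (g θ - g (θ + t)) * K t by ring, abs_mul,
    abs_of_nonneg (hK0 t)]
  exact mul_le_mul_of_nonneg_right hlip (hK0 t)

def jacksonApprox (f : ℝ → ℝ) (n : ℕ) : ℝ[X] :=
  C (∫ t in -π..π, jacksonKernel n t)⁻¹ * jacksonPoly (f ∘ cos) n

lemma natDegree_jacksonApprox_le (f : ℝ → ℝ) (n : ℕ) :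
    (jacksonApprox f n).natDegree ≤ 2 * (n - 1) :=
  (natDegree_C_mul_le _ _).trans (natDegree_jacksonPoly_le _ n)

lemma abs_sub_eval_jacksonApprox_le {f : ℝ → ℝ} (hf : LipschitzWith 1 f) {n : ℕ} (hn : 1 ≤ n)
    {x : ℝ} (hx : x ∈ Set.Icc (-1 : ℝ) 1) : |f x - (jacksonApprox f n).eval x| ≤ 700 / n := by
  obtain ⟨θ, rfl⟩ : ∃ θ, cos θ = x := ⟨arccos x, cos_arccos hx.1 hx.2⟩
  set Λ := ∫ t in -π..π, jacksonKernel n t with hΛdef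
  have hΛ : (n : ℝ) ^ 3 / 7 ≤ Λ := le_integral_jacksonKernel hn
  have hn' : (0 : ℝ) < n := by exact_mod_cast hn
  have hΛ0 : 0 < Λ := lt_of_lt_of_le (by positivity) hΛ
  have hg : LipschitzWith 1 (f ∘ cos) := by simpa using hf.comp lipschitzWith_cos
  have hper : Function.Periodic (f ∘ cos) (2 * π) := fun s => by simp [cos_add_two_pi]
  have heven : Function.Even (f ∘ cos) := fun s => by simp
  have hdiff : f (cos θ) - (jacksonApprox f n).eval (cos θ) =
      Λ⁻¹ * (Λ * (f ∘ cos) θ - ∫ t in -π..π, (f ∘ cos) (θ + t) * jacksonKernel n t) := by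
    rw [jacksonApprox, eval_mul, eval_C, eval_jacksonPoly hg.continuous hper heven, ← hΛdef]
    field_simp
    simp only [Function.comp_apply, mul_comm]
  rw [hdiff, abs_mul, abs_inv, abs_of_pos hΛ0]
  calc Λ⁻¹ * |Λ * (f ∘ cos) θ - ∫ t in -π..π, (f ∘ cos) (θ + t) * jacksonKernel n t|
      ≤ Λ⁻¹ * (100 * n ^ 2) := by
        gcongr
        exact (abs_integral_mul_sub_integral_le hg (continuous_jacksonKernel n)
          (jacksonKernel_nonneg n) (by linarith [pi_pos]) θ).trans
          (integral_abs_mul_jacksonKernel_le hn)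
    _ ≤ ((n : ℝ) ^ 3 / 7)⁻¹ * (100 * n ^ 2) := by gcongr
    _ = 700 / n := by field_simp; ring

lemma coeffL1Norm_jacksonApprox_le {f : ℝ → ℝ} (hfb : ∀ x ∈ Set.Icc (-1 : ℝ) 1, |f x| ≤ 1)
    {n : ℕ} (hn : 1 ≤ n) : coeffL1Norm (jacksonApprox f n) ≤ 14 * π * n * (25 / 4) ^ (n - 1) := by
  set Λ := ∫ t in -π..π, jacksonKernel n t
  have hΛ : (n : ℝ) ^ 3 / 7 ≤ Λ := le_integral_jacksonKernel hn
  have hn' : (0 : ℝ) < n := by exact_mod_cast hn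
  have hB : ∀ s, |(f ∘ cos) s| ≤ 1 := fun s => hfb _ ⟨neg_one_le_cos s, cos_le_one s⟩
  rw [jacksonApprox, coeffL1Norm_C_mul, abs_inv, abs_of_pos (lt_of_lt_of_le (by positivity) hΛ)]
  calc Λ⁻¹ * coeffL1Norm (jacksonPoly (f ∘ cos) n)
      ≤ ((n : ℝ) ^ 3 / 7)⁻¹ * (n ^ 4 * (2 * π * 1 * (5 / 2) ^ (2 * (n - 1)))) := by
        gcongr
        exact coeffL1Norm_jacksonPoly_le hB n
    _ = 14 * π * n * (25 / 4) ^ (n - 1) := by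
        rw [pow_mul]
        field_simp
        ring

lemma sq_succ_mul_pow_le (m : ℕ) : ((m + 1) * (25 / 4) ^ m : ℝ) ^ 2 ≤ 7 * 81 ^ m := by
  have hb : (m + 1 : ℝ) ≤ 5 / 2 * (7 / 5) ^ m := by
    have := one_add_mul_le_pow (a := (2 / 5 : ℝ)) (by norm_num) m
    norm_num at this
    linarith
  calc ((m + 1) * (25 / 4) ^ m : ℝ) ^ 2 ≤ (5 / 2 * (7 / 5) ^ m * (25 / 4) ^ m) ^ 2 := by gcongr
    _ = 25 / 4 * (1225 / 16) ^ m := by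
        rw [mul_assoc, ← mul_pow, mul_pow, ← pow_mul, mul_comm m 2, pow_mul]
        norm_num
    _ ≤ 7 * 81 ^ m := by gcongr <;> norm_num

end JacksonApprox

end

open JacksonApprox

/-- constructive Jackson-type theorem. There is an absolute constant
`C > 0` such that for every `k ≥ 1` and every `1`-Lipschitz `f : ℝ → ℝ` with `|f| ≤ 1` on
`[-1, 1]`, some real polynomial `P` of degree at most `k` satisfies
`sup_{x ∈ [-1,1]} |f x − P x| ≤ C/k` and `∑_j (coeff of x^j in P)² ≤ C · 9^k`. -/
theorem stmt_16 :
    ∃ C : ℝ, 0 < C ∧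
      ∀ (k : ℕ), 1 ≤ k →
      ∀ f : ℝ → ℝ, LipschitzWith 1 f → (∀ x ∈ Set.Icc (-1 : ℝ) 1, |f x| ≤ 1) →
      ∃ P : Polynomial ℝ, P.natDegree ≤ k ∧
        (∀ x ∈ Set.Icc (-1 : ℝ) 1, |f x - P.eval x| ≤ C / k) ∧
        ∑ j ∈ P.support, (P.coeff j) ^ 2 ≤ C * 9 ^ k := by
  refine ⟨10 ^ 6, by norm_num, fun k hk f hf hfb => ?_⟩
  set m := k / 2
  refine ⟨jacksonApprox f (m + 1), (natDegree_jacksonApprox_le f _).trans (by omega),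
    fun x hx => (abs_sub_eval_jacksonApprox_le hf (Nat.le_add_left 1 m) hx).trans ?_, ?_⟩
  · have hk' : (k : ℝ) < 2 * (m + 1) := by exact_mod_cast (by omega : k < 2 * (m + 1))
    rw [div_le_div_iff₀ (by positivity) (by positivity)]
    push_cast
    nlinarith
  · have hl1 := coeffL1Norm_jacksonApprox_le hfb (Nat.le_add_left 1 m)
    rw [Nat.add_sub_cancel, Nat.cast_succ] at hl1
    have hπ : (14 * π) ^ 2 * 7 ≤ 10 ^ 6 := by nlinarith [pi_lt_four, pi_pos]
    calc _ ≤ coeffL1Norm (jacksonApprox f (m + 1)) ^ 2 := sum_sq_coeff_le_sq_coeffL1Norm _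
      _ ≤ (14 * π * (m + 1) * (25 / 4) ^ m) ^ 2 := pow_le_pow_left₀ (apply_nonneg _ _) hl1 2
      _ = (14 * π) ^ 2 * ((m + 1) * (25 / 4) ^ m) ^ 2 := by ring
      _ ≤ (14 * π) ^ 2 * 7 * 81 ^ m := by
        rw [mul_assoc]
        exact mul_le_mul_of_nonneg_left (sq_succ_mul_pow_le m) (by positivity)
      _ ≤ 10 ^ 6 * 9 ^ (2 * m) := by
        rw [pow_mul, show (9 : ℝ) ^ 2 = 81 by norm_num]
        exact mul_le_mul_of_nonneg_right hπ (by positivity)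
      _ ≤ 10 ^ 6 * 9 ^ k := by gcongr <;> [norm_num; omega]
end
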